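/- arXiv:2203.08397 — 10 statements merged into one kernel-verified Lean document; each statement's English description precedes it below -/
import Mathlib

section
/- If the systems C and D of the eight-element four-qubit product set S are merged into a single ℂ⁴ factor, the resulting set of eight pairwise orthogonal product vectors in ℂ²_A ⊗ ℂ²_B ⊗ ℂ⁴_{CD} is NOT an unextendible product basis: there exists a nonzero product vector u ⊗ v ⊗ w (u, v ∈ ℂ², w ∈ ℂ⁴) orthogonal to all eight members of the merged set. (In fact w may be chosen orthogonal to |0⟩⊗|0⟩, |1⟩⊗a₄' and a₃⊗a₄, with u = a₁ and v = a₂'.) -/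
open scoped BigOperators

/-- The qubit vector `(cos θ, sin θ)`. -/
noncomputable def ketp (θ : ℝ) : Fin 2 → ℂ := ![(Real.cos θ : ℂ), (Real.sin θ : ℂ)]

/-- The qubit vector `(sin θ, -cos θ)`, orthogonal to `ketp θ`. -/
noncomputable def ketm (θ : ℝ) : Fin 2 → ℂ := ![(Real.sin θ : ℂ), -(Real.cos θ : ℂ)]

/-- The qubit basis vector `|0⟩ = (1,0)`. -/
noncomputable def ket0 : Fin 2 → ℂ := ![1, 0]

/-- The qubit basis vector `|1⟩ = (0,1)`. -/
noncomputable def ket1 : Fin 2 → ℂ := ![0, 1]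

/-- Tensor product of four qubit vectors, as a function on the four-qubit index set. -/
noncomputable def tp4 (p q r s : Fin 2 → ℂ) : Fin 2 × Fin 2 × Fin 2 × Fin 2 → ℂ :=
  fun x => p x.1 * q x.2.1 * r x.2.2.1 * s x.2.2.2

/-- Standard (conjugate-linear in the first slot) inner product on the four-qubit space. -/
noncomputable def ip4 (f g : Fin 2 × Fin 2 × Fin 2 × Fin 2 → ℂ) : ℂ :=
  ∑ x, (starRingEnd ℂ) (f x) * g x

/-- The eight members of the four-qubit product set `S`, with (A,B,C,D) components as in the
paper: rows `(0,0,0,0)`, `(1,a₂,a₃',a₄)`, `(0,a₂,a₃',1)`, `(1,a₂,a₃',a₄')`, `(a₁,a₂',1,a₄')`,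
`(a₁',1,a₃,b₄)`, `(a₁,1,a₃,a₄)`, `(a₁',a₂',1,b₄')`. -/
noncomputable def S4 (x₁ x₂ x₃ x₄ y₄ : ℝ) : Fin 8 → (Fin 2 × Fin 2 × Fin 2 × Fin 2 → ℂ) :=
  ![tp4 ket0 ket0 ket0 ket0,
    tp4 ket1 (ketp x₂) (ketm x₃) (ketp x₄),
    tp4 ket0 (ketp x₂) (ketm x₃) ket1,
    tp4 ket1 (ketp x₂) (ketm x₃) (ketm x₄),
    tp4 (ketp x₁) (ketm x₂) ket1 (ketm x₄),
    tp4 (ketm x₁) ket1 (ketp x₃) (ketp y₄),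
    tp4 (ketp x₁) ket1 (ketp x₃) (ketp x₄),
    tp4 (ketm x₁) (ketm x₂) ket1 (ketm y₄)]

/-!
Take `u = a₁` and `v = a₂'`. Since `a₁ ⊥ a₁'` and `a₂' ⊥ a₂`, five of the eight members of `S`
are orthogonal to `u ⊗ v ⊗ w` whatever `w` is. The other three, `(0,0,0,0)`, `(a₁,a₂',1,a₄')`
and `(a₁,1,a₃,a₄)`, only impose that `w ∈ ℂ⁴` be orthogonal to `|00⟩`, `|1⟩ ⊗ a₄'` and
`a₃ ⊗ a₄`: three linear conditions in dimension four, so a nonzero such `w` exists.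
-/

open Matrix

theorem exists_ne_zero_forall_star_dotProduct_eq_zero {K ι n : Type*} [Field K] [StarRing K]
    [Fintype ι] [Fintype n] (v : ι → n → K) (h : Fintype.card ι < Fintype.card n) :
    ∃ w ≠ 0, ∀ i, star w ⬝ᵥ v i = 0 := by
  have hker : LinearMap.ker (Matrix.of v).mulVecLin ≠ ⊥ :=
    LinearMap.ker_ne_bot_of_finrank_lt (by simpa using h)
  obtain ⟨w, hw, hw0⟩ := Submodule.exists_mem_ne_zero_of_ne_bot hker
  refine ⟨star w, star_ne_zero.mpr hw0, fun i => ?_⟩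
  rw [star_star, dotProduct_comm]
  exact congrFun hw i

theorem product_vector_ne_zero {α β γ M : Type*} [MulZeroClass M] [NoZeroDivisors M]
    {u : α → M} {v : β → M} {w : γ → M} (hu : u ≠ 0) (hv : v ≠ 0) (hw : w ≠ 0) :
    (fun x : α × β × γ => u x.1 * v x.2.1 * w x.2.2) ≠ 0 := by
  obtain ⟨a, ha⟩ := Function.ne_iff.mp hu
  obtain ⟨b, hb⟩ := Function.ne_iff.mp hv
  obtain ⟨c, hc⟩ := Function.ne_iff.mp hw
  exact Function.ne_iff.mpr ⟨(a, b, c), by simp_all⟩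

/-- The vector `r ⊗ s` of the merged system `ℂ²_C ⊗ ℂ²_D = ℂ⁴_{CD}`. -/
def tp2 {α β M : Type*} [Mul M] (r : α → M) (s : β → M) : α × β → M := fun p => r p.1 * s p.2

theorem ip4_tp4 (u v p q r s : Fin 2 → ℂ) (w : Fin 2 × Fin 2 → ℂ) :
    ip4 (fun x => u x.1 * v x.2.1 * w x.2.2) (tp4 p q r s)
      = (star u ⬝ᵥ p) * (star v ⬝ᵥ q) * (star w ⬝ᵥ tp2 r s) := by
  simp only [ip4, tp4, tp2, dotProduct, Fintype.sum_prod_type, Fin.sum_univ_two, Pi.star_apply,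
    Complex.star_def, map_mul]
  ring

section Qubit

variable (θ : ℝ)

theorem star_ketp_dotProduct_ketm : star (ketp θ) ⬝ᵥ ketm θ = 0 := by
  simp only [ketp, ketm, dotProduct, Fin.sum_univ_two, Pi.star_apply, Complex.star_def,
    Complex.conj_ofReal, cons_val_zero, cons_val_one]
  ring

theorem star_ketm_dotProduct_ketp : star (ketm θ) ⬝ᵥ ketp θ = 0 := by
  simp only [ketp, ketm, dotProduct, Fin.sum_univ_two, Pi.star_apply, Complex.star_def,
    map_neg, Complex.conj_ofReal, cons_val_zero, cons_val_one]
  ring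

theorem star_ketp_dotProduct_self : star (ketp θ) ⬝ᵥ ketp θ = 1 := by
  simp only [ketp, dotProduct, Fin.sum_univ_two, Pi.star_apply, Complex.star_def,
    Complex.conj_ofReal, cons_val_zero, cons_val_one]
  rw [← Complex.ofReal_one, ← Real.cos_sq_add_sin_sq θ]
  push_cast
  ring

theorem star_ketm_dotProduct_self : star (ketm θ) ⬝ᵥ ketm θ = 1 := by
  simp only [ketm, dotProduct, Fin.sum_univ_two, Pi.star_apply, Complex.star_def,
    map_neg, Complex.conj_ofReal, cons_val_zero, cons_val_one]
  rw [← Complex.ofReal_one, ← Real.sin_sq_add_cos_sq θ]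
  push_cast
  ring

theorem ketp_ne_zero : ketp θ ≠ 0 := fun h => by
  simpa [h] using star_ketp_dotProduct_self θ

theorem ketm_ne_zero : ketm θ ≠ 0 := fun h => by
  simpa [h] using star_ketm_dotProduct_self θ

end Qubit

theorem stmt0_general (x₁ x₂ x₃ x₄ y₄ : ℝ) :
    ∃ (u v : Fin 2 → ℂ) (w : Fin 2 × Fin 2 → ℂ),
      (fun x : Fin 2 × Fin 2 × Fin 2 × Fin 2 => u x.1 * v x.2.1 * w x.2.2) ≠ 0 ∧
      ∀ k : Fin 8, ip4 (fun x : Fin 2 × Fin 2 × Fin 2 × Fin 2 => u x.1 * v x.2.1 * w x.2.2) (S4 x₁ x₂ x₃ x₄ y₄ k) = 0 := by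
  obtain ⟨w, hw0, hw⟩ := exists_ne_zero_forall_star_dotProduct_eq_zero
    ![tp2 ket0 ket0, tp2 ket1 (ketm x₄), tp2 (ketp x₃) (ketp x₄)] (by simp)
  have h00 : star w ⬝ᵥ tp2 ket0 ket0 = 0 := hw 0
  have h1a₄' : star w ⬝ᵥ tp2 ket1 (ketm x₄) = 0 := hw 1
  have ha₃a₄ : star w ⬝ᵥ tp2 (ketp x₃) (ketp x₄) = 0 := hw 2
  refine ⟨ketp x₁, ketm x₂, w, product_vector_ne_zero (ketp_ne_zero x₁) (ketm_ne_zero x₂) hw0, ?_⟩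
  intro k
  fin_cases k <;>
    simp only [S4, Fin.reduceFinMk, Fin.zero_eta, Fin.mk_one, cons_val, ip4_tp4,
      star_ketp_dotProduct_ketm, star_ketm_dotProduct_ketp, h00, h1a₄', ha₃a₄, mul_zero, zero_mul]

/-- Merging systems C and D of the four-qubit product set `S` into a single `ℂ⁴` factor, the resulting set of eight orthogonal product vectors in `ℂ²_A ⊗ ℂ²_B ⊗ ℂ⁴_{CD}` is NOT an unextendible product basis: some nonzero product vector `u ⊗ v ⊗ w` is orthogonal to all eight members. -/
theorem stmt0 (x₁ x₂ x₃ x₄ y₄ : ℝ)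
    (hx₁ : x₁ ∈ Set.Ioo 0 (Real.pi / 2)) (hx₂ : x₂ ∈ Set.Ioo 0 (Real.pi / 2))
    (hx₃ : x₃ ∈ Set.Ioo 0 (Real.pi / 2)) (hx₄ : x₄ ∈ Set.Ioo 0 (Real.pi / 2))
    (hy₄ : y₄ ∈ Set.Ioo 0 (Real.pi / 2)) (hne : x₄ ≠ y₄) :
    ∃ (u v : Fin 2 → ℂ) (w : Fin 2 × Fin 2 → ℂ),
      (fun x : Fin 2 × Fin 2 × Fin 2 × Fin 2 => u x.1 * v x.2.1 * w x.2.2) ≠ 0 ∧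
      ∀ k : Fin 8, ip4 (fun x : Fin 2 × Fin 2 × Fin 2 × Fin 2 => u x.1 * v x.2.1 * w x.2.2) (S4 x₁ x₂ x₃ x₄ y₄ k) = 0 :=
  stmt0_general x₁ x₂ x₃ x₄ y₄
end

section
/- If the systems B and D of the eight-element four-qubit product set S are merged into a single ℂ⁴ factor, the resulting set of eight pairwise orthogonal product vectors in ℂ²_A ⊗ ℂ²_C ⊗ ℂ⁴_{BD} is NOT an unextendible product basis: there exists a nonzero product vector u ⊗ v ⊗ w (u, v ∈ ℂ², w ∈ ℂ⁴) orthogonal to all eight members of the merged set. (In fact w may be chosen orthogonal to |0⟩⊗|0⟩, |1⟩⊗b₄ and a₂'⊗b₄', with u = a₁' and v = a₃.) -/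
open scoped BigOperators

/-- The eight members of the four-qubit product set `S`, with (A,B,C,D) components as in the
paper: rows `(0,0,0,0)`, `(1,a₂,a₃',a₄)`, `(0,a₂,a₃',1)`, `(1,a₂,a₃',a₄')`, `(a₁,a₂',1,a₄')`,
`(a₁',1,a₃,b₄)`, `(a₁,1,a₃,a₄)`, `(a₁',a₂',1,b₄')`. -/

private lemma ip4_fact (u v : Fin 2 → ℂ) (w : Fin 2 × Fin 2 → ℂ) (p q r s : Fin 2 → ℂ) :
    ip4 (fun x : Fin 2 × Fin 2 × Fin 2 × Fin 2 => u x.1 * v x.2.2.1 * w (x.2.1, x.2.2.2)) (tp4 p q r s)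
    = (∑ a, (starRingEnd ℂ) (u a) * p a) * (∑ c, (starRingEnd ℂ) (v c) * r c)
      * (∑ b, ∑ d, (starRingEnd ℂ) (w (b, d)) * (q b * s d)) := by
  simp only [ip4, tp4, Fintype.sum_prod_type, Fin.sum_univ_two, map_mul]
  ring

/-- Merging systems B and D of the four-qubit product set `S` into a single `ℂ⁴` factor, the resulting set of eight orthogonal product vectors in `ℂ²_A ⊗ ℂ²_C ⊗ ℂ⁴_{BD}` is NOT an unextendible product basis: some nonzero product vector `u ⊗ v ⊗ w` is orthogonal to all eight members. -/
theorem stmt1 (x₁ x₂ x₃ x₄ y₄ : ℝ)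
    (hx₁ : x₁ ∈ Set.Ioo 0 (Real.pi / 2)) (hx₂ : x₂ ∈ Set.Ioo 0 (Real.pi / 2))
    (hx₃ : x₃ ∈ Set.Ioo 0 (Real.pi / 2)) (hx₄ : x₄ ∈ Set.Ioo 0 (Real.pi / 2))
    (hy₄ : y₄ ∈ Set.Ioo 0 (Real.pi / 2)) (hne : x₄ ≠ y₄) :
    ∃ (u v : Fin 2 → ℂ) (w : Fin 2 × Fin 2 → ℂ),
      (fun x : Fin 2 × Fin 2 × Fin 2 × Fin 2 => u x.1 * v x.2.2.1 * w (x.2.1, x.2.2.2)) ≠ 0 ∧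
      ∀ k : Fin 8, ip4 (fun x : Fin 2 × Fin 2 × Fin 2 × Fin 2 => u x.1 * v x.2.2.1 * w (x.2.1, x.2.2.2)) (S4 x₁ x₂ x₃ x₄ y₄ k) = 0 := by
  set w : Fin 2 × Fin 2 → ℂ :=
    fun p => ![![(0:ℂ), -(Real.cos x₂ : ℂ)],
      ![(Real.sin x₂ : ℂ) * (Real.cos y₄ : ℂ) * (Real.sin y₄ : ℂ),
        -((Real.sin x₂ : ℂ) * (Real.cos y₄ : ℂ) * (Real.cos y₄ : ℂ))]] p.1 p.2 with hw
  have hw00 : w (0,0) = 0 := rfl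
  have hw01 : w (0,1) = -(Real.cos x₂ : ℂ) := rfl
  have hw10 : w (1,0) = (Real.sin x₂ : ℂ) * (Real.cos y₄ : ℂ) * (Real.sin y₄ : ℂ) := rfl
  have hw11 : w (1,1) = -((Real.sin x₂ : ℂ) * (Real.cos y₄ : ℂ) * (Real.cos y₄ : ℂ)) := rfl
  refine ⟨ketm x₁, ketp x₃, w, ?_, ?_⟩
  · intro h
    have h0 := congrFun h (0, 0, 0, 1)
    simp only [ketm, ketp, Matrix.cons_val_zero, Pi.zero_apply, hw01] at h0
    have hs1 : Real.sin x₁ ≠ 0 :=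
      (Real.sin_pos_of_pos_of_lt_pi hx₁.1 (by linarith [Real.pi_pos, hx₁.2])).ne'
    have hc3 : Real.cos x₃ ≠ 0 :=
      (Real.cos_pos_of_mem_Ioo ⟨by linarith [hx₃.1, Real.pi_pos], hx₃.2⟩).ne'
    have hc2 : Real.cos x₂ ≠ 0 :=
      (Real.cos_pos_of_mem_Ioo ⟨by linarith [hx₂.1, Real.pi_pos], hx₂.2⟩).ne'
    exact (mul_ne_zero (mul_ne_zero (Complex.ofReal_ne_zero.mpr hs1)
      (Complex.ofReal_ne_zero.mpr hc3))
      (neg_ne_zero.mpr (Complex.ofReal_ne_zero.mpr hc2))) h0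
  · have hy : (Real.sin y₄ : ℂ) ^ 2 + (Real.cos y₄ : ℂ) ^ 2 = 1 := by
      exact_mod_cast congrArg (Complex.ofReal) (Real.sin_sq_add_cos_sq y₄)
    have hA : (∑ a, (starRingEnd ℂ) (ketm x₁ a) * ketp x₁ a) = 0 := by
      simp only [ketm, ketp, Fin.sum_univ_two, Matrix.cons_val_zero, Matrix.cons_val_one,
        Matrix.head_cons, map_neg, Complex.conj_ofReal]
      ring
    have hC : (∑ c, (starRingEnd ℂ) (ketp x₃ c) * ketm x₃ c) = 0 := by
      simp only [ketm, ketp, Fin.sum_univ_two, Matrix.cons_val_zero, Matrix.cons_val_one,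
        Matrix.head_cons, map_neg, Complex.conj_ofReal]
      ring
    have hW0 : (∑ b, ∑ d, (starRingEnd ℂ) (w (b, d)) * (ket0 b * ket0 d)) = 0 := by
      simp only [ket0, Fin.sum_univ_two, hw00, hw01, hw10, hw11, Matrix.cons_val_zero,
        Matrix.cons_val_one, Matrix.head_cons, map_neg, map_mul, Complex.conj_ofReal, map_zero]
      ring
    have hW5 : (∑ b, ∑ d, (starRingEnd ℂ) (w (b, d)) * (ket1 b * ketp y₄ d)) = 0 := by
      simp only [ket1, ketp, Fin.sum_univ_two, hw00, hw01, hw10, hw11, Matrix.cons_val_zero,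
        Matrix.cons_val_one, Matrix.head_cons, map_neg, map_mul, Complex.conj_ofReal, map_zero]
      ring
    have hW7 : (∑ b, ∑ d, (starRingEnd ℂ) (w (b, d)) * (ketm x₂ b * ketm y₄ d)) = 0 := by
      simp only [ketm, Fin.sum_univ_two, hw00, hw01, hw10, hw11, Matrix.cons_val_zero,
        Matrix.cons_val_one, Matrix.head_cons, map_neg, map_mul, Complex.conj_ofReal, map_zero]
      linear_combination (-((Real.sin x₂ : ℂ) * (Real.cos x₂ : ℂ) * (Real.cos y₄ : ℂ))) * hy
    intro k
    fin_cases k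
    · show ip4 _ (tp4 ket0 ket0 ket0 ket0) = 0
      rw [ip4_fact, hW0]; ring
    · show ip4 _ (tp4 ket1 (ketp x₂) (ketm x₃) (ketp x₄)) = 0
      rw [ip4_fact, hC]; ring
    · show ip4 _ (tp4 ket0 (ketp x₂) (ketm x₃) ket1) = 0
      rw [ip4_fact, hC]; ring
    · show ip4 _ (tp4 ket1 (ketp x₂) (ketm x₃) (ketm x₄)) = 0
      rw [ip4_fact, hC]; ring
    · show ip4 _ (tp4 (ketp x₁) (ketm x₂) ket1 (ketm x₄)) = 0
      rw [ip4_fact, hA]; ring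
    · show ip4 _ (tp4 (ketm x₁) ket1 (ketp x₃) (ketp y₄)) = 0
      rw [ip4_fact, hW5]; ring
    · show ip4 _ (tp4 (ketp x₁) ket1 (ketp x₃) (ketp x₄)) = 0
      rw [ip4_fact, hA]; ring
    · show ip4 _ (tp4 (ketm x₁) (ketm x₂) ket1 (ketm y₄)) = 0
      rw [ip4_fact, hW7]; ring
end

section
/- If the systems B and C of the eight-element four-qubit product set S are merged into a single ℂ⁴ factor, the resulting set of eight pairwise orthogonal product vectors in ℂ²_A ⊗ ℂ²_D ⊗ ℂ⁴_{BC} is NOT an unextendible product basis: there exists a nonzero product vector u ⊗ v ⊗ w (u, v ∈ ℂ², w ∈ ℂ⁴) orthogonal to all eight members of the merged set. (In fact w may be chosen orthogonal to a₂⊗a₃', |1⟩⊗a₃ and a₂'⊗|1⟩, with u = |1⟩ and v = a₄.) -/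
open scoped BigOperators

noncomputable def wBC (x₂ x₃ : ℝ) : Fin 2 × Fin 2 → ℂ :=
  fun p => ![![-((Real.cos x₂:ℂ)^2*(Real.cos x₃:ℂ)^2 + (Real.sin x₂:ℂ)^2*(Real.sin x₃:ℂ)^2
                  + (Real.sin x₂:ℂ)^2*(Real.cos x₃:ℂ)^2),
               -((Real.cos x₂:ℂ)^2*(Real.cos x₃:ℂ)*(Real.sin x₃:ℂ))],
             ![(Real.cos x₂:ℂ)*(Real.sin x₂:ℂ)*(Real.sin x₃:ℂ)^2,
               -((Real.cos x₂:ℂ)*(Real.sin x₂:ℂ)*(Real.sin x₃:ℂ)*(Real.cos x₃:ℂ))]] p.1 p.2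

lemma ip4_factor (u v : Fin 2 → ℂ) (w : Fin 2 × Fin 2 → ℂ) (p q r s : Fin 2 → ℂ) :
    ip4 (fun x : Fin 2 × Fin 2 × Fin 2 × Fin 2 => u x.1 * v x.2.2.2 * w (x.2.1, x.2.2.1))
      (tp4 p q r s)
    = (∑ i, (starRingEnd ℂ) (u i) * p i) * (∑ i, (starRingEnd ℂ) (v i) * s i) *
      (∑ i, ∑ j, (starRingEnd ℂ) (w (i, j)) * (q i * r j)) := by
  simp only [ip4, tp4, Fintype.sum_prod_type, Fin.sum_univ_two, map_mul]
  ring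

/-- Merging systems B and C of the four-qubit product set `S` into a single `ℂ⁴` factor, the resulting set of eight orthogonal product vectors in `ℂ²_A ⊗ ℂ²_D ⊗ ℂ⁴_{BC}` is NOT an unextendible product basis: some nonzero product vector `u ⊗ v ⊗ w` is orthogonal to all eight members. -/
theorem stmt2 (x₁ x₂ x₃ x₄ y₄ : ℝ)
    (hx₁ : x₁ ∈ Set.Ioo 0 (Real.pi / 2)) (hx₂ : x₂ ∈ Set.Ioo 0 (Real.pi / 2))
    (hx₃ : x₃ ∈ Set.Ioo 0 (Real.pi / 2)) (hx₄ : x₄ ∈ Set.Ioo 0 (Real.pi / 2))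
    (hy₄ : y₄ ∈ Set.Ioo 0 (Real.pi / 2)) (hne : x₄ ≠ y₄) :
    ∃ (u v : Fin 2 → ℂ) (w : Fin 2 × Fin 2 → ℂ),
      (fun x : Fin 2 × Fin 2 × Fin 2 × Fin 2 => u x.1 * v x.2.2.2 * w (x.2.1, x.2.2.1)) ≠ 0 ∧
      ∀ k : Fin 8, ip4 (fun x : Fin 2 × Fin 2 × Fin 2 × Fin 2 => u x.1 * v x.2.2.2 * w (x.2.1, x.2.2.1)) (S4 x₁ x₂ x₃ x₄ y₄ k) = 0 := by
  refine ⟨ket1, ket0, wBC x₂ x₃, ?_, ?_⟩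
  · intro h
    have h0 := congrFun h (1, 1, 1, 0)
    simp only [wBC, ket1, ket0, Matrix.cons_val_zero, Matrix.cons_val_one, Matrix.head_cons,
      Pi.zero_apply, one_mul] at h0
    have hz : (Real.cos x₂ * Real.sin x₂ * Real.sin x₃ * Real.cos x₃ : ℂ) = 0 := by
      push_cast at h0 ⊢
      linear_combination -h0
    have hc2' : (0:ℝ) < Real.cos x₂ :=
      Real.cos_pos_of_mem_Ioo ⟨by linarith [hx₂.1, Real.pi_pos], hx₂.2⟩
    have hs2' : (0:ℝ) < Real.sin x₂ :=
      Real.sin_pos_of_pos_of_lt_pi hx₂.1 (by linarith [hx₂.2, Real.pi_pos])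
    have hc3' : (0:ℝ) < Real.cos x₃ :=
      Real.cos_pos_of_mem_Ioo ⟨by linarith [hx₃.1, Real.pi_pos], hx₃.2⟩
    have hs3' : (0:ℝ) < Real.sin x₃ :=
      Real.sin_pos_of_pos_of_lt_pi hx₃.1 (by linarith [hx₃.2, Real.pi_pos])
    norm_cast at hz
    nlinarith [mul_pos (mul_pos (mul_pos hc2' hs2') hs3') hc3', hz]
  · intro k
    fin_cases k
    · show ip4 _ (tp4 ket0 ket0 ket0 ket0) = 0
      rw [ip4_factor]
      simp only [wBC, ket0, ket1, Fin.sum_univ_two, Matrix.cons_val_zero, Matrix.cons_val_one,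
        Matrix.head_cons, map_mul, map_neg, map_one, map_zero, map_add, map_pow,
        Complex.conj_ofReal]
      ring
    · show ip4 _ (tp4 ket1 (ketp x₂) (ketm x₃) (ketp x₄)) = 0
      rw [ip4_factor]
      simp only [wBC, ket0, ket1, ketp, ketm, Fin.sum_univ_two, Matrix.cons_val_zero,
        Matrix.cons_val_one, Matrix.head_cons, map_mul, map_neg, map_one, map_zero, map_add,
        map_pow, Complex.conj_ofReal]
      ring
    · show ip4 _ (tp4 ket0 (ketp x₂) (ketm x₃) ket1) = 0
      rw [ip4_factor]
      simp only [wBC, ket0, ket1, ketp, ketm, Fin.sum_univ_two, Matrix.cons_val_zero,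
        Matrix.cons_val_one, Matrix.head_cons, map_mul, map_neg, map_one, map_zero, map_add,
        map_pow, Complex.conj_ofReal]
      ring
    · show ip4 _ (tp4 ket1 (ketp x₂) (ketm x₃) (ketm x₄)) = 0
      rw [ip4_factor]
      simp only [wBC, ket0, ket1, ketp, ketm, Fin.sum_univ_two, Matrix.cons_val_zero,
        Matrix.cons_val_one, Matrix.head_cons, map_mul, map_neg, map_one, map_zero, map_add,
        map_pow, Complex.conj_ofReal]
      ring
    · show ip4 _ (tp4 (ketp x₁) (ketm x₂) ket1 (ketm x₄)) = 0
      rw [ip4_factor]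
      simp only [wBC, ket0, ket1, ketp, ketm, Fin.sum_univ_two, Matrix.cons_val_zero,
        Matrix.cons_val_one, Matrix.head_cons, map_mul, map_neg, map_one, map_zero, map_add,
        map_pow, Complex.conj_ofReal]
      ring
    · show ip4 _ (tp4 (ketm x₁) ket1 (ketp x₃) (ketp y₄)) = 0
      rw [ip4_factor]
      simp only [wBC, ket0, ket1, ketp, ketm, Fin.sum_univ_two, Matrix.cons_val_zero,
        Matrix.cons_val_one, Matrix.head_cons, map_mul, map_neg, map_one, map_zero, map_add,
        map_pow, Complex.conj_ofReal]
      ring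
    · show ip4 _ (tp4 (ketp x₁) ket1 (ketp x₃) (ketp x₄)) = 0
      rw [ip4_factor]
      simp only [wBC, ket0, ket1, ketp, ketm, Fin.sum_univ_two, Matrix.cons_val_zero,
        Matrix.cons_val_one, Matrix.head_cons, map_mul, map_neg, map_one, map_zero, map_add,
        map_pow, Complex.conj_ofReal]
      ring
    · show ip4 _ (tp4 (ketm x₁) (ketm x₂) ket1 (ketm y₄)) = 0
      rw [ip4_factor]
      simp only [wBC, ket0, ket1, ketp, ketm, Fin.sum_univ_two, Matrix.cons_val_zero,
        Matrix.cons_val_one, Matrix.head_cons, map_mul, map_neg, map_one, map_zero, map_add,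
        map_pow, Complex.conj_ofReal]
      ring
end

section
/- If the systems A and D of the eight-element four-qubit product set S are merged into a single ℂ⁴ factor, the resulting set of eight pairwise orthogonal product vectors in ℂ²_B ⊗ ℂ²_C ⊗ ℂ⁴_{AD} is NOT an unextendible product basis: there exists a nonzero product vector u ⊗ v ⊗ w (u, v ∈ ℂ², w ∈ ℂ⁴) orthogonal to all eight members of the merged set. (In fact w may be chosen orthogonal to |0⟩⊗|0⟩, a₁⊗a₄' and a₁'⊗b₄', with u = |0⟩ and v = a₃.) -/
open scoped BigOperators

/-- Merging systems A and D of the four-qubit product set `S` into a single `ℂ⁴` factor, the resulting set of eight orthogonal product vectors in `ℂ²_B ⊗ ℂ²_C ⊗ ℂ⁴_{AD}` is NOT an unextendible product basis: some nonzero product vector `u ⊗ v ⊗ w` is orthogonal to all eight members. -/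
theorem stmt3 (x₁ x₂ x₃ x₄ y₄ : ℝ)
    (hx₁ : x₁ ∈ Set.Ioo 0 (Real.pi / 2)) (hx₂ : x₂ ∈ Set.Ioo 0 (Real.pi / 2))
    (hx₃ : x₃ ∈ Set.Ioo 0 (Real.pi / 2)) (hx₄ : x₄ ∈ Set.Ioo 0 (Real.pi / 2))
    (hy₄ : y₄ ∈ Set.Ioo 0 (Real.pi / 2)) (hne : x₄ ≠ y₄) :
    ∃ (u v : Fin 2 → ℂ) (w : Fin 2 × Fin 2 → ℂ),
      (fun x : Fin 2 × Fin 2 × Fin 2 × Fin 2 => u x.2.1 * v x.2.2.1 * w (x.1, x.2.2.2)) ≠ 0 ∧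
      ∀ k : Fin 8, ip4 (fun x : Fin 2 × Fin 2 × Fin 2 × Fin 2 => u x.2.1 * v x.2.2.1 * w (x.1, x.2.2.2)) (S4 x₁ x₂ x₃ x₄ y₄ k) = 0 := by
  refine ⟨ket0, ketp x₃,
    (fun p => ![![(0:ℂ), (Real.cos x₁ * Real.sin x₁ * (Real.sin x₄ * Real.cos y₄ - Real.cos x₄ * Real.sin y₄) : ℝ)],
        ![((Real.cos x₄ * Real.cos y₄ : ℝ) : ℂ),
          ((Real.cos x₁ ^ 2 * Real.cos x₄ * Real.sin y₄ + Real.sin x₁ ^ 2 * Real.sin x₄ * Real.cos y₄ : ℝ) : ℂ)]] p.1 p.2),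
    ?_, ?_⟩
  · intro h
    have h2 := congrFun h (1, 0, 0, 0)
    simp only [ket0, ketp, Matrix.cons_val_zero, Matrix.cons_val_one, Matrix.head_cons,
      Pi.zero_apply, mul_eq_zero, one_mul] at h2
    have hc3 : Real.cos x₃ ≠ 0 := by
      have := Real.cos_pos_of_mem_Ioo ⟨by linarith [hx₃.1, Real.pi_pos], hx₃.2⟩
      exact ne_of_gt this
    have hc4 : Real.cos x₄ ≠ 0 :=
      ne_of_gt (Real.cos_pos_of_mem_Ioo ⟨by linarith [hx₄.1, Real.pi_pos], hx₄.2⟩)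
    have hcy : Real.cos y₄ ≠ 0 :=
      ne_of_gt (Real.cos_pos_of_mem_Ioo ⟨by linarith [hy₄.1, Real.pi_pos], hy₄.2⟩)
    rcases h2 with h2 | h2
    · exact_mod_cast hc3 (by exact_mod_cast h2)
    · exact mul_ne_zero (by exact_mod_cast hc4) (by exact_mod_cast hcy)
        (by exact_mod_cast h2)
  · intro k
    have p1 : (Real.sin x₁ : ℂ) ^ 2 + (Real.cos x₁ : ℂ) ^ 2 = 1 := by
      have := Real.sin_sq_add_cos_sq x₁
      exact_mod_cast congrArg (fun t : ℝ => (t : ℂ)) this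
    have p3 : (Real.sin x₃ : ℂ) ^ 2 + (Real.cos x₃ : ℂ) ^ 2 = 1 := by
      have := Real.sin_sq_add_cos_sq x₃
      exact_mod_cast congrArg (fun t : ℝ => (t : ℂ)) this
    have e0 : S4 x₁ x₂ x₃ x₄ y₄ 0 = tp4 ket0 ket0 ket0 ket0 := rfl
    have e1 : S4 x₁ x₂ x₃ x₄ y₄ 1 = tp4 ket1 (ketp x₂) (ketm x₃) (ketp x₄) := rfl
    have e2 : S4 x₁ x₂ x₃ x₄ y₄ 2 = tp4 ket0 (ketp x₂) (ketm x₃) ket1 := rfl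
    have e3 : S4 x₁ x₂ x₃ x₄ y₄ 3 = tp4 ket1 (ketp x₂) (ketm x₃) (ketm x₄) := rfl
    have e4 : S4 x₁ x₂ x₃ x₄ y₄ 4 = tp4 (ketp x₁) (ketm x₂) ket1 (ketm x₄) := rfl
    have e5 : S4 x₁ x₂ x₃ x₄ y₄ 5 = tp4 (ketm x₁) ket1 (ketp x₃) (ketp y₄) := rfl
    have e6 : S4 x₁ x₂ x₃ x₄ y₄ 6 = tp4 (ketp x₁) ket1 (ketp x₃) (ketp x₄) := rfl
    have e7 : S4 x₁ x₂ x₃ x₄ y₄ 7 = tp4 (ketm x₁) (ketm x₂) ket1 (ketm y₄) := rfl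
    fin_cases k
    · simp [e0, e1, e2, e3, e4, e5, e6, e7, ip4, tp4, ket0, ket1, ketp, ketm, Fintype.sum_prod_type, Fin.sum_univ_two,
        Complex.conj_ofReal, -Complex.ofReal_cos, -Complex.ofReal_sin]
      try ring
    · simp [e0, e1, e2, e3, e4, e5, e6, e7, ip4, tp4, ket0, ket1, ketp, ketm, Fintype.sum_prod_type, Fin.sum_univ_two,
        Complex.conj_ofReal, -Complex.ofReal_cos, -Complex.ofReal_sin]
      try ring
    · simp [e0, e1, e2, e3, e4, e5, e6, e7, ip4, tp4, ket0, ket1, ketp, ketm, Fintype.sum_prod_type, Fin.sum_univ_two,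
        Complex.conj_ofReal, -Complex.ofReal_cos, -Complex.ofReal_sin]
      try ring
    · simp [e0, e1, e2, e3, e4, e5, e6, e7, ip4, tp4, ket0, ket1, ketp, ketm, Fintype.sum_prod_type, Fin.sum_univ_two,
        Complex.conj_ofReal, -Complex.ofReal_cos, -Complex.ofReal_sin]
      try ring
    · simp [e0, e1, e2, e3, e4, e5, e6, e7, ip4, tp4, ket0, ket1, ketp, ketm, Fintype.sum_prod_type, Fin.sum_univ_two,
        Complex.conj_ofReal, -Complex.ofReal_cos, -Complex.ofReal_sin]
      linear_combination (-((Real.sin x₂ : ℂ) * Real.sin x₃ * Real.sin x₁ * Real.cos x₄ *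
          Real.sin x₄ * Real.cos y₄)) * p1
    · simp [e0, e1, e2, e3, e4, e5, e6, e7, ip4, tp4, ket0, ket1, ketp, ketm, Fintype.sum_prod_type, Fin.sum_univ_two,
        Complex.conj_ofReal, -Complex.ofReal_cos, -Complex.ofReal_sin]
      try ring
    · simp [e0, e1, e2, e3, e4, e5, e6, e7, ip4, tp4, ket0, ket1, ketp, ketm, Fintype.sum_prod_type, Fin.sum_univ_two,
        Complex.conj_ofReal, -Complex.ofReal_cos, -Complex.ofReal_sin]
      try ring
    · simp [e0, e1, e2, e3, e4, e5, e6, e7, ip4, tp4, ket0, ket1, ketp, ketm, Fintype.sum_prod_type, Fin.sum_univ_two,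
        Complex.conj_ofReal, -Complex.ofReal_cos, -Complex.ofReal_sin]
      linear_combination ((Real.sin x₂ : ℂ) * Real.sin x₃ * Real.cos x₁ * Real.cos x₄ *
          Real.sin y₄ * Real.cos y₄) * p1
end

section
/- If the systems A and C of the eight-element four-qubit product set S are merged into a single ℂ⁴ factor, the resulting set of eight pairwise orthogonal product vectors in ℂ²_B ⊗ ℂ²_D ⊗ ℂ⁴_{AC} IS an unextendible product basis of size eight: no nonzero product vector u ⊗ v ⊗ w (u, v ∈ ℂ², w ∈ ℂ⁴) is orthogonal to all eight members of the merged set. -/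
open scoped BigOperators

private lemma elim2 {q r : ℂ} (h : q * r = 0) (hq : q ≠ 0) : r = 0 :=
  (mul_eq_zero.mp h).resolve_left hq

private lemma elim2' {q r : ℂ} (h : q * r = 0) (hr : r ≠ 0) : q = 0 :=
  (mul_eq_zero.mp h).resolve_right hr

private lemma elim3 {p q r : ℂ} (h : p * q * r = 0) (hp : p ≠ 0) : q * r = 0 := by
  rcases mul_eq_zero.mp h with h' | h'
  · rw [elim2 h' hp]; ring
  · rw [h']; ring

private lemma solve2 {a b A B C D : ℂ} (hdet : A * D - B * C ≠ 0)
    (h1 : a * A + b * B = 0) (h2 : a * C + b * D = 0) : a = 0 ∧ b = 0 := by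
  constructor
  · exact elim2' (show a * (A * D - B * C) = 0 by linear_combination D * h1 - B * h2) hdet
  · exact elim2' (show b * (A * D - B * C) = 0 by linear_combination -C * h1 + A * h2) hdet

private lemma key (c1 s1 c2 s2 c3 s3 c4 s4 cy sy a b c d e00 e01 e10 e11 : ℂ)
    (P1 : c1*c1 + s1*s1 = 1) (P2 : c2*c2 + s2*s2 = 1) (P3 : c3*c3 + s3*s3 = 1)
    (P4 : c4*c4 + s4*s4 = 1) (Py : cy*cy + sy*sy = 1)
    (nc1 : c1 ≠ 0) (ns1 : s1 ≠ 0) (nc2 : c2 ≠ 0) (ns2 : s2 ≠ 0)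
    (nc3 : c3 ≠ 0) (ns3 : s3 ≠ 0) (nc4 : c4 ≠ 0) (ns4 : s4 ≠ 0)
    (ncy : cy ≠ 0) (nsy : sy ≠ 0)
    (D1 : c4*sy - s4*cy ≠ 0) (D2 : c4*cy + s4*sy ≠ 0)
    (h0 : a*c*e00 = 0)
    (h1 : (a*c2 + b*s2) * (c*c4 + d*s4) * (e10*s3 - e11*c3) = 0)
    (h2 : (a*c2 + b*s2) * d * (e00*s3 - e01*c3) = 0)
    (h3 : (a*c2 + b*s2) * (c*s4 - d*c4) * (e10*s3 - e11*c3) = 0)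
    (h4 : (a*s2 - b*c2) * (c*s4 - d*c4) * (e01*c1 + e11*s1) = 0)
    (h5 : b * (c*cy + d*sy) * (e00*s1*c3 + e01*s1*s3 - e10*c1*c3 - e11*c1*s3) = 0)
    (h6 : b * (c*c4 + d*s4) * (e00*c1*c3 + e01*c1*s3 + e10*s1*c3 + e11*s1*s3) = 0)
    (h7 : (a*s2 - b*c2) * (c*sy - d*cy) * (e01*s1 - e11*c1) = 0) :
    (a = 0 ∧ b = 0) ∨ (c = 0 ∧ d = 0) ∨ (e00 = 0 ∧ e01 = 0 ∧ e10 = 0 ∧ e11 = 0) := by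
  by_cases hu : a = 0 ∧ b = 0
  · exact Or.inl hu
  by_cases hv : c = 0 ∧ d = 0
  · exact Or.inr (Or.inl hv)
  by_cases hw : e00 = 0 ∧ e01 = 0 ∧ e10 = 0 ∧ e11 = 0
  · exact Or.inr (Or.inr hw)
  exfalso
  have vQ : c*c4 + d*s4 = 0 → c*s4 - d*c4 = 0 → False := by
    intro hq hq'
    exact hv (solve2 (A := c4) (B := s4) (C := s4) (D := -c4)
      (fun hz => one_ne_zero (show (1:ℂ) = 0 by linear_combination -hz - P4))
      (by linear_combination hq) (by linear_combination hq'))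
  have vR : c*cy + d*sy = 0 → c*sy - d*cy = 0 → False := by
    intro hq hq'
    exact hv (solve2 (A := cy) (B := sy) (C := sy) (D := -cy)
      (fun hz => one_ne_zero (show (1:ℂ) = 0 by linear_combination -hz - Py))
      (by linear_combination hq) (by linear_combination hq'))
  have vQRp : c*c4 + d*s4 = 0 → c*cy + d*sy = 0 → False := by
    intro hq hq'
    exact hv (solve2 (A := c4) (B := s4) (C := cy) (D := sy)
      (fun hz => D1 (by linear_combination hz))
      (by linear_combination hq) (by linear_combination hq'))
  have vQRm : c*s4 - d*c4 = 0 → c*sy - d*cy = 0 → False := by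
    intro hq hq'
    exact hv (solve2 (A := s4) (B := -c4) (C := sy) (D := -cy)
      (fun hz => D1 (by linear_combination hz))
      (by linear_combination hq) (by linear_combination hq'))
  have vQpRm : c*c4 + d*s4 = 0 → c*sy - d*cy = 0 → False := by
    intro hq hq'
    exact hv (solve2 (A := c4) (B := s4) (C := sy) (D := -cy)
      (fun hz => D2 (by linear_combination -hz))
      (by linear_combination hq) (by linear_combination hq'))
  have vQmRp : c*s4 - d*c4 = 0 → c*cy + d*sy = 0 → False := by
    intro hq hq'
    exact hv (solve2 (A := s4) (B := -c4) (C := cy) (D := sy)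
      (fun hz => D2 (by linear_combination hz))
      (by linear_combination hq) (by linear_combination hq'))
  have uP : a*c2 + b*s2 = 0 → a*s2 - b*c2 = 0 → False := by
    intro hq hq'
    exact hu (solve2 (A := c2) (B := s2) (C := s2) (D := -c2)
      (fun hz => one_ne_zero (show (1:ℂ) = 0 by linear_combination -hz - P2))
      (by linear_combination hq) (by linear_combination hq'))
  by_cases hPp : a*c2 + b*s2 = 0
  · -- Case II : Pp = 0
    have hPm : a*s2 - b*c2 ≠ 0 := fun h => uP hPp h
    have hane : a ≠ 0 := by
      intro h0'
      exact hu ⟨h0', elim2' (show b*s2 = 0 by linear_combination hPp - c2*h0') ns2⟩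
    have hbne : b ≠ 0 := by
      intro h0'
      exact hu ⟨elim2' (show a*c2 = 0 by linear_combination hPp - s2*h0') nc2, h0'⟩
    have hce : c*e00 = 0 := elim3 h0 hane
    have hQmG : (c*s4 - d*c4) * (e01*c1 + e11*s1) = 0 := elim3 h4 hPm
    have hRmH : (c*sy - d*cy) * (e01*s1 - e11*c1) = 0 := elim3 h7 hPm
    have hRpK5 : (c*cy + d*sy) * (e00*s1*c3 + e01*s1*s3 - e10*c1*c3 - e11*c1*s3) = 0 := elim3 h5 hbne
    have hQpK6 : (c*c4 + d*s4) * (e00*c1*c3 + e01*c1*s3 + e10*s1*c3 + e11*s1*s3) = 0 := elim3 h6 hbne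
    by_cases hQm : c*s4 - d*c4 = 0
    · have hQp : c*c4 + d*s4 ≠ 0 := fun h => vQ h hQm
      have hcne0 : c ≠ 0 := by
        intro h0'
        exact hv ⟨h0', elim2' (show d*c4 = 0 by linear_combination -hQm + s4*h0') nc4⟩
      have he00 : e00 = 0 := elim2 hce hcne0
      have hK6 := elim2 hQpK6 hQp
      have hRm : c*sy - d*cy ≠ 0 := fun h => vQRm hQm h
      have hH : e01*s1 - e11*c1 = 0 := elim2 hRmH hRm
      have hRp : c*cy + d*sy ≠ 0 := fun h => vQmRp hQm h
      have hK5 := elim2 hRpK5 hRp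
      obtain ⟨hE, hF⟩ := solve2 (a := e00*c3 + e01*s3) (b := e10*c3 + e11*s3)
        (A := s1) (B := -c1) (C := c1) (D := s1)
        (fun hz => one_ne_zero (show (1:ℂ) = 0 by linear_combination hz - P1))
        (by linear_combination hK5) (by linear_combination hK6)
      have he01 : e01 = 0 := elim2' (show e01*s3 = 0 by linear_combination hE - c3*he00) ns3
      have he11 : e11 = 0 := elim2' (show e11*c1 = 0 by linear_combination -hH + s1*he01) nc1
      have he10 : e10 = 0 := elim2' (show e10*c3 = 0 by linear_combination hF - s3*he11) nc3
      exact hw ⟨he00, he01, he10, he11⟩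
    · have hG : e01*c1 + e11*s1 = 0 := elim2 hQmG hQm
      by_cases hRm : c*sy - d*cy = 0
      · have hcne0 : c ≠ 0 := by
          intro h0'
          exact hv ⟨h0', elim2' (show d*cy = 0 by linear_combination -hRm + sy*h0') ncy⟩
        have he00 : e00 = 0 := elim2 hce hcne0
        have hRp : c*cy + d*sy ≠ 0 := fun h => vR h hRm
        have hK5 := elim2 hRpK5 hRp
        have hQp : c*c4 + d*s4 ≠ 0 := fun h => vQpRm h hRm
        have hK6 := elim2 hQpK6 hQp
        obtain ⟨hE, hF⟩ := solve2 (a := e00*c3 + e01*s3) (b := e10*c3 + e11*s3)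
          (A := s1) (B := -c1) (C := c1) (D := s1)
          (fun hz => one_ne_zero (show (1:ℂ) = 0 by linear_combination hz - P1))
          (by linear_combination hK5) (by linear_combination hK6)
        have he01 : e01 = 0 := elim2' (show e01*s3 = 0 by linear_combination hE - c3*he00) ns3
        have he11 : e11 = 0 := elim2' (show e11*s1 = 0 by linear_combination hG - c1*he01) ns1
        have he10 : e10 = 0 := elim2' (show e10*c3 = 0 by linear_combination hF - s3*he11) nc3
        exact hw ⟨he00, he01, he10, he11⟩
      · have hH : e01*s1 - e11*c1 = 0 := elim2 hRmH hRm
        obtain ⟨he01, he11⟩ := solve2 (a := e01) (b := e11) (A := c1) (B := s1) (C := s1) (D := -c1)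
          (fun hz => one_ne_zero (show (1:ℂ) = 0 by linear_combination -hz - P1))
          (by linear_combination hG) (by linear_combination hH)
        by_cases hQp : c*c4 + d*s4 = 0
        · have hcne0 : c ≠ 0 := by
            intro h0'
            exact hv ⟨h0', elim2' (show d*s4 = 0 by linear_combination hQp - c4*h0') ns4⟩
          have he00 : e00 = 0 := elim2 hce hcne0
          have hRp : c*cy + d*sy ≠ 0 := fun h => vQRp hQp h
          have hK5 := elim2 hRpK5 hRp
          have he10 : e10 = 0 := elim2'
            (show e10*(c1*c3) = 0 by linear_combination -hK5 + s1*c3*he00 + s1*s3*he01 - c1*s3*he11)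
            (mul_ne_zero nc1 nc3)
          exact hw ⟨he00, he01, he10, he11⟩
        · have hK6 := elim2 hQpK6 hQp
          by_cases hRp : c*cy + d*sy = 0
          · have hcne0 : c ≠ 0 := by
              intro h0'
              exact hv ⟨h0', elim2' (show d*sy = 0 by linear_combination hRp - cy*h0') nsy⟩
            have he00 : e00 = 0 := elim2 hce hcne0
            have he10 : e10 = 0 := elim2'
              (show e10*(s1*c3) = 0 by linear_combination hK6 - c1*c3*he00 - c1*s3*he01 - s1*s3*he11)
              (mul_ne_zero ns1 nc3)
            exact hw ⟨he00, he01, he10, he11⟩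
          · have hK5 := elim2 hRpK5 hRp
            obtain ⟨hE, hF⟩ := solve2 (a := e00*c3 + e01*s3) (b := e10*c3 + e11*s3)
              (A := s1) (B := -c1) (C := c1) (D := s1)
              (fun hz => one_ne_zero (show (1:ℂ) = 0 by linear_combination hz - P1))
              (by linear_combination hK5) (by linear_combination hK6)
            have he00 : e00 = 0 := elim2' (show e00*c3 = 0 by linear_combination hE - s3*he01) nc3
            have he10 : e10 = 0 := elim2' (show e10*c3 = 0 by linear_combination hF - s3*he11) nc3
            exact hw ⟨he00, he01, he10, he11⟩
  · -- Case I : Pp ≠ 0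
    have hQpM : (c*c4 + d*s4) * (e10*s3 - e11*c3) = 0 := elim3 h1 hPp
    have hQmM : (c*s4 - d*c4) * (e10*s3 - e11*c3) = 0 := elim3 h3 hPp
    have hdN : d * (e00*s3 - e01*c3) = 0 := elim3 h2 hPp
    have hM : e10*s3 - e11*c3 = 0 := by
      by_cases hQp : c*c4 + d*s4 = 0
      · exact elim2 hQmM (fun h => vQ hQp h)
      · exact elim2 hQpM hQp
    by_cases hd : d = 0
    · have hcne0 : c ≠ 0 := fun h0' => hv ⟨h0', hd⟩
      have hQp : c*c4 + d*s4 ≠ 0 := by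
        rw [hd]; intro h
        exact hcne0 (elim2' (show c*c4 = 0 by linear_combination h) nc4)
      have hQm : c*s4 - d*c4 ≠ 0 := by
        rw [hd]; intro h
        exact hcne0 (elim2' (show c*s4 = 0 by linear_combination h) ns4)
      have hRp : c*cy + d*sy ≠ 0 := by
        rw [hd]; intro h
        exact hcne0 (elim2' (show c*cy = 0 by linear_combination h) ncy)
      have hRm : c*sy - d*cy ≠ 0 := by
        rw [hd]; intro h
        exact hcne0 (elim2' (show c*sy = 0 by linear_combination h) nsy)
      have hae : a*e00 = 0 :=
        elim2 (show c*(a*e00) = 0 by linear_combination h0) hcne0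
      have hPmG : (a*s2 - b*c2)*(e01*c1 + e11*s1) = 0 :=
        elim2 (show (c*s4 - d*c4)*((a*s2 - b*c2)*(e01*c1 + e11*s1)) = 0 by linear_combination h4) hQm
      have hPmH : (a*s2 - b*c2)*(e01*s1 - e11*c1) = 0 :=
        elim2 (show (c*sy - d*cy)*((a*s2 - b*c2)*(e01*s1 - e11*c1)) = 0 by linear_combination h7) hRm
      have hbK5 : b*(e00*s1*c3 + e01*s1*s3 - e10*c1*c3 - e11*c1*s3) = 0 :=
        elim2 (show (c*cy + d*sy)*(b*(e00*s1*c3 + e01*s1*s3 - e10*c1*c3 - e11*c1*s3)) = 0 by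
          linear_combination h5) hRp
      have hbK6 : b*(e00*c1*c3 + e01*c1*s3 + e10*s1*c3 + e11*s1*s3) = 0 :=
        elim2 (show (c*c4 + d*s4)*(b*(e00*c1*c3 + e01*c1*s3 + e10*s1*c3 + e11*s1*s3)) = 0 by
          linear_combination h6) hQp
      by_cases hPm : a*s2 - b*c2 = 0
      · have hane : a ≠ 0 := by
          intro h0'
          have hb0 : b = 0 := elim2' (show b*c2 = 0 by linear_combination -hPm + s2*h0') nc2
          exact hPp (by rw [h0', hb0]; ring)
        have hbne : b ≠ 0 := by
          intro h0'
          have ha0 : a = 0 := elim2' (show a*s2 = 0 by linear_combination hPm + c2*h0') ns2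
          exact hPp (by rw [ha0, h0']; ring)
        have he00 : e00 = 0 := elim2 hae hane
        have hK5 := elim2 hbK5 hbne
        have hK6 := elim2 hbK6 hbne
        obtain ⟨hE, hF⟩ := solve2 (a := e00*c3 + e01*s3) (b := e10*c3 + e11*s3)
          (A := s1) (B := -c1) (C := c1) (D := s1)
          (fun hz => one_ne_zero (show (1:ℂ) = 0 by linear_combination hz - P1))
          (by linear_combination hK5) (by linear_combination hK6)
        have he01 : e01 = 0 := elim2' (show e01*s3 = 0 by linear_combination hE - c3*he00) ns3
        obtain ⟨he10, he11⟩ := solve2 (a := e10) (b := e11) (A := s3) (B := -c3) (C := c3) (D := s3)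
          (fun hz => one_ne_zero (show (1:ℂ) = 0 by linear_combination hz - P3))
          (by linear_combination hM) (by linear_combination hF)
        exact hw ⟨he00, he01, he10, he11⟩
      · have hG : e01*c1 + e11*s1 = 0 := elim2 hPmG hPm
        have hH : e01*s1 - e11*c1 = 0 := elim2 hPmH hPm
        obtain ⟨he01, he11⟩ := solve2 (a := e01) (b := e11) (A := c1) (B := s1) (C := s1) (D := -c1)
          (fun hz => one_ne_zero (show (1:ℂ) = 0 by linear_combination -hz - P1))
          (by linear_combination hG) (by linear_combination hH)
        have he10 : e10 = 0 := elim2' (show e10*s3 = 0 by linear_combination hM + c3*he11) ns3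
        have he00ne : e00 ≠ 0 := fun h => hw ⟨h, he01, he10, he11⟩
        have ha0 : a = 0 := elim2' hae he00ne
        have hbne : b ≠ 0 := fun h0' => hu ⟨ha0, h0'⟩
        have hK5 := elim2 hbK5 hbne
        exact he00ne (elim2'
          (show e00*(s1*c3) = 0 by linear_combination hK5 - s1*s3*he01 + c1*c3*he10 + c1*s3*he11)
          (mul_ne_zero ns1 nc3))
    · have hN : e00*s3 - e01*c3 = 0 := elim2 hdN hd
      have h4'' : (a*s2 - b*c2)*(c*s4 - d*c4)*(e00*c1 + e10*s1) = 0 := by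
        refine elim2 (q := s3) ?_ ns3
        linear_combination c3*h4 + (a*s2 - b*c2)*(c*s4 - d*c4)*c1*hN + (a*s2 - b*c2)*(c*s4 - d*c4)*s1*hM
      have h7'' : (a*s2 - b*c2)*(c*sy - d*cy)*(e00*s1 - e10*c1) = 0 := by
        refine elim2 (q := s3) ?_ ns3
        linear_combination c3*h7 + (a*s2 - b*c2)*(c*sy - d*cy)*(s1*hN - c1*hM)
      have h5'' : b*(c*cy + d*sy)*(e00*s1 - e10*c1) = 0 := by
        linear_combination c3*h5 + b*(c*cy + d*sy)*s1*s3*hN - b*(c*cy + d*sy)*c1*s3*hM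
          - b*(c*cy + d*sy)*(e00*s1 - e10*c1)*P3
      have h6'' : b*(c*c4 + d*s4)*(e00*c1 + e10*s1) = 0 := by
        linear_combination c3*h6 + b*(c*c4 + d*s4)*c1*s3*hN + b*(c*c4 + d*s4)*s1*s3*hM
          - b*(c*c4 + d*s4)*(e00*c1 + e10*s1)*P3
      by_cases hG' : e00*c1 + e10*s1 = 0
      · by_cases hH' : e00*s1 - e10*c1 = 0
        · obtain ⟨he00, he10⟩ := solve2 (a := e00) (b := e10) (A := c1) (B := s1) (C := s1) (D := -c1)
            (fun hz => one_ne_zero (show (1:ℂ) = 0 by linear_combination -hz - P1))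
            (by linear_combination hG') (by linear_combination hH')
          have he01 : e01 = 0 := elim2' (show e01*c3 = 0 by linear_combination -hN + s3*he00) nc3
          have he11 : e11 = 0 := elim2' (show e11*c3 = 0 by linear_combination -hM + s3*he10) nc3
          exact hw ⟨he00, he01, he10, he11⟩
        · have he00ne : e00 ≠ 0 := by
            intro hz
            apply hH'
            have he10 : e10 = 0 := elim2' (show e10*s1 = 0 by linear_combination hG' - c1*hz) ns1
            rw [hz, he10]; ring
          have hac : a*c = 0 := elim2' (show (a*c)*e00 = 0 by linear_combination h0) he00ne
          have hPmRm : (a*s2 - b*c2)*(c*sy - d*cy) = 0 := elim2' h7'' hH'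
          have hbRp : b*(c*cy + d*sy) = 0 := elim2' h5'' hH'
          by_cases ha0 : a = 0
          · have hbne : b ≠ 0 := fun h => hu ⟨ha0, h⟩
            have hRp : c*cy + d*sy = 0 := elim2 hbRp hbne
            have hPmne : a*s2 - b*c2 ≠ 0 := by
              rw [ha0]; intro h
              exact hbne (elim2' (show b*c2 = 0 by linear_combination -h) nc2)
            exact vR hRp (elim2 hPmRm hPmne)
          · have hc0 : c = 0 := elim2 hac ha0
            have hRpne : c*cy + d*sy ≠ 0 := by
              rw [hc0]; intro h
              exact hd (elim2' (show d*sy = 0 by linear_combination h) nsy)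
            have hb0 : b = 0 := elim2' hbRp hRpne
            have hRmne : c*sy - d*cy ≠ 0 := by
              rw [hc0]; intro h
              exact hd (elim2' (show d*cy = 0 by linear_combination -h) ncy)
            have hPm0 : a*s2 - b*c2 = 0 := elim2' hPmRm hRmne
            exact ha0 (elim2' (show a*s2 = 0 by linear_combination hPm0 + c2*hb0) ns2)
      · by_cases hH' : e00*s1 - e10*c1 = 0
        · have he00ne : e00 ≠ 0 := by
            intro hz
            apply hG'
            have he10 : e10 = 0 := elim2' (show e10*c1 = 0 by linear_combination -hH' + s1*hz) nc1
            rw [hz, he10]; ring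
          have hac : a*c = 0 := elim2' (show (a*c)*e00 = 0 by linear_combination h0) he00ne
          have hPmQm : (a*s2 - b*c2)*(c*s4 - d*c4) = 0 := elim2' h4'' hG'
          have hbQp : b*(c*c4 + d*s4) = 0 := elim2' h6'' hG'
          by_cases ha0 : a = 0
          · have hbne : b ≠ 0 := fun h => hu ⟨ha0, h⟩
            have hQp : c*c4 + d*s4 = 0 := elim2 hbQp hbne
            have hPmne : a*s2 - b*c2 ≠ 0 := by
              rw [ha0]; intro h
              exact hbne (elim2' (show b*c2 = 0 by linear_combination -h) nc2)
            exact vQ hQp (elim2 hPmQm hPmne)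
          · have hc0 : c = 0 := elim2 hac ha0
            have hQmne : c*s4 - d*c4 ≠ 0 := by
              rw [hc0]; intro h
              exact hd (elim2' (show d*c4 = 0 by linear_combination -h) nc4)
            have hPm0 : a*s2 - b*c2 = 0 := elim2' hPmQm hQmne
            have hQpne : c*c4 + d*s4 ≠ 0 := by
              rw [hc0]; intro h
              exact hd (elim2' (show d*s4 = 0 by linear_combination h) ns4)
            have hb0 : b = 0 := elim2' hbQp hQpne
            exact ha0 (elim2' (show a*s2 = 0 by linear_combination hPm0 + c2*hb0) ns2)
        · have hPmQm := elim2' h4'' hG'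
          have hbQp := elim2' h6'' hG'
          have hbRp := elim2' h5'' hH'
          have hPmRm := elim2' h7'' hH'
          by_cases hb0 : b = 0
          · have hane : a ≠ 0 := fun h => hu ⟨h, hb0⟩
            have hPmne : a*s2 - b*c2 ≠ 0 := by
              rw [hb0]; intro h
              exact hane (elim2' (show a*s2 = 0 by linear_combination h) ns2)
            exact vQRm (elim2 hPmQm hPmne) (elim2 hPmRm hPmne)
          · exact vQRp (elim2 hbQp hb0) (elim2 hbRp hb0)

/-- Merging systems A and C of the four-qubit product set `S` into a single `ℂ⁴` factor, the resulting set of eight orthogonal product vectors in `ℂ²_B ⊗ ℂ²_D ⊗ ℂ⁴_{AC}` IS an unextendible product basis of size eight: no nonzero product vector `u ⊗ v ⊗ w` is orthogonal to all eight members. -/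
theorem stmt4 (x₁ x₂ x₃ x₄ y₄ : ℝ)
    (hx₁ : x₁ ∈ Set.Ioo 0 (Real.pi / 2)) (hx₂ : x₂ ∈ Set.Ioo 0 (Real.pi / 2))
    (hx₃ : x₃ ∈ Set.Ioo 0 (Real.pi / 2)) (hx₄ : x₄ ∈ Set.Ioo 0 (Real.pi / 2))
    (hy₄ : y₄ ∈ Set.Ioo 0 (Real.pi / 2)) (hne : x₄ ≠ y₄) :
    ∀ (u v : Fin 2 → ℂ) (w : Fin 2 × Fin 2 → ℂ),
      (∀ k : Fin 8, ip4 (fun x : Fin 2 × Fin 2 × Fin 2 × Fin 2 => u x.2.1 * v x.2.2.2 * w (x.1, x.2.2.1)) (S4 x₁ x₂ x₃ x₄ y₄ k) = 0) →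
      (fun x : Fin 2 × Fin 2 × Fin 2 × Fin 2 => u x.2.1 * v x.2.2.2 * w (x.1, x.2.2.1)) = 0 := by
  have pi_pos := Real.pi_pos
  obtain ⟨ha₁, hb₁⟩ := hx₁
  obtain ⟨ha₂, hb₂⟩ := hx₂
  obtain ⟨ha₃, hb₃⟩ := hx₃
  obtain ⟨ha₄, hb₄⟩ := hx₄
  obtain ⟨hay, hby⟩ := hy₄
  have pyth : ∀ t : ℝ, (Real.cos t : ℂ)*(Real.cos t : ℂ) + (Real.sin t : ℂ)*(Real.sin t : ℂ) = 1 := by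
    intro t
    exact_mod_cast (show Real.cos t * Real.cos t + Real.sin t * Real.sin t = 1 by
      linear_combination Real.sin_sq_add_cos_sq t)
  have ncos : ∀ t : ℝ, 0 < t → t < Real.pi / 2 → (Real.cos t : ℂ) ≠ 0 := fun t h h' =>
    Complex.ofReal_ne_zero.mpr (ne_of_gt (Real.cos_pos_of_mem_Ioo ⟨by linarith, h'⟩))
  have nsin : ∀ t : ℝ, 0 < t → t < Real.pi / 2 → (Real.sin t : ℂ) ≠ 0 := fun t h h' =>
    Complex.ofReal_ne_zero.mpr (ne_of_gt (Real.sin_pos_of_pos_of_lt_pi h (by linarith)))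
  have D1r : Real.cos x₄ * Real.sin y₄ - Real.sin x₄ * Real.cos y₄ ≠ 0 := by
    rw [show Real.cos x₄ * Real.sin y₄ - Real.sin x₄ * Real.cos y₄ = Real.sin (y₄ - x₄) by
      rw [Real.sin_sub]; ring]
    intro hz
    have := (Real.sin_eq_zero_iff_of_lt_of_lt (by linarith) (by linarith)).mp hz
    exact hne (by linarith)
  have D1 : (Real.cos x₄ : ℂ) * (Real.sin y₄ : ℂ) - (Real.sin x₄ : ℂ) * (Real.cos y₄ : ℂ) ≠ 0 := by
    exact_mod_cast D1r
  have D2r : Real.cos x₄ * Real.cos y₄ + Real.sin x₄ * Real.sin y₄ ≠ 0 := by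
    rw [show Real.cos x₄ * Real.cos y₄ + Real.sin x₄ * Real.sin y₄ = Real.cos (x₄ - y₄) by
      rw [Real.cos_sub]]
    exact ne_of_gt (Real.cos_pos_of_mem_Ioo ⟨by linarith, by linarith⟩)
  have D2 : (Real.cos x₄ : ℂ) * (Real.cos y₄ : ℂ) + (Real.sin x₄ : ℂ) * (Real.sin y₄ : ℂ) ≠ 0 := by
    exact_mod_cast D2r
  intro u v w h
  have h0 : ip4 (fun x : Fin 2 × Fin 2 × Fin 2 × Fin 2 => u x.2.1 * v x.2.2.2 * w (x.1, x.2.2.1))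
      (tp4 ket0 ket0 ket0 ket0) = 0 := h 0
  have h1 : ip4 (fun x : Fin 2 × Fin 2 × Fin 2 × Fin 2 => u x.2.1 * v x.2.2.2 * w (x.1, x.2.2.1))
      (tp4 ket1 (ketp x₂) (ketm x₃) (ketp x₄)) = 0 := h 1
  have h2 : ip4 (fun x : Fin 2 × Fin 2 × Fin 2 × Fin 2 => u x.2.1 * v x.2.2.2 * w (x.1, x.2.2.1))
      (tp4 ket0 (ketp x₂) (ketm x₃) ket1) = 0 := h 2
  have h3 : ip4 (fun x : Fin 2 × Fin 2 × Fin 2 × Fin 2 => u x.2.1 * v x.2.2.2 * w (x.1, x.2.2.1))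
      (tp4 ket1 (ketp x₂) (ketm x₃) (ketm x₄)) = 0 := h 3
  have h4 : ip4 (fun x : Fin 2 × Fin 2 × Fin 2 × Fin 2 => u x.2.1 * v x.2.2.2 * w (x.1, x.2.2.1))
      (tp4 (ketp x₁) (ketm x₂) ket1 (ketm x₄)) = 0 := h 4
  have h5 : ip4 (fun x : Fin 2 × Fin 2 × Fin 2 × Fin 2 => u x.2.1 * v x.2.2.2 * w (x.1, x.2.2.1))
      (tp4 (ketm x₁) ket1 (ketp x₃) (ketp y₄)) = 0 := h 5
  have h6 : ip4 (fun x : Fin 2 × Fin 2 × Fin 2 × Fin 2 => u x.2.1 * v x.2.2.2 * w (x.1, x.2.2.1))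
      (tp4 (ketp x₁) ket1 (ketp x₃) (ketp x₄)) = 0 := h 6
  have h7 : ip4 (fun x : Fin 2 × Fin 2 × Fin 2 × Fin 2 => u x.2.1 * v x.2.2.2 * w (x.1, x.2.2.1))
      (tp4 (ketm x₁) (ketm x₂) ket1 (ketm y₄)) = 0 := h 7
  simp only [ip4, tp4, ket0, ket1, ketp, ketm, Fintype.sum_prod_type, Fin.sum_univ_two,
    Matrix.cons_val_zero, Matrix.cons_val_one, Matrix.head_cons, map_mul, mul_one, mul_zero,
    zero_mul, one_mul, add_zero, zero_add, mul_neg, neg_mul, neg_neg] at h0 h1 h2 h3 h4 h5 h6 h7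
  have main := key (Real.cos x₁ : ℂ) (Real.sin x₁ : ℂ) (Real.cos x₂ : ℂ) (Real.sin x₂ : ℂ)
      (Real.cos x₃ : ℂ) (Real.sin x₃ : ℂ) (Real.cos x₄ : ℂ) (Real.sin x₄ : ℂ)
      (Real.cos y₄ : ℂ) (Real.sin y₄ : ℂ)
      ((starRingEnd ℂ) (u 0)) ((starRingEnd ℂ) (u 1))
      ((starRingEnd ℂ) (v 0)) ((starRingEnd ℂ) (v 1))
      ((starRingEnd ℂ) (w (0, 0))) ((starRingEnd ℂ) (w (0, 1)))
      ((starRingEnd ℂ) (w (1, 0))) ((starRingEnd ℂ) (w (1, 1)))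
      (pyth x₁) (pyth x₂) (pyth x₃) (pyth x₄) (pyth y₄)
      (ncos x₁ ha₁ hb₁) (nsin x₁ ha₁ hb₁) (ncos x₂ ha₂ hb₂) (nsin x₂ ha₂ hb₂)
      (ncos x₃ ha₃ hb₃) (nsin x₃ ha₃ hb₃) (ncos x₄ ha₄ hb₄) (nsin x₄ ha₄ hb₄)
      (ncos y₄ hay hby) (nsin y₄ hay hby) D1 D2
      (by linear_combination h0) (by linear_combination h1) (by linear_combination h2)
      (by linear_combination h3) (by linear_combination h4) (by linear_combination h5)
      (by linear_combination h6) (by linear_combination h7)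
  have conjz : ∀ z : ℂ, (starRingEnd ℂ) z = 0 → z = 0 := by
    intro z hz
    simpa using congrArg (starRingEnd ℂ) hz
  funext x
  obtain ⟨i, j, k, l⟩ := x
  simp only [Pi.zero_apply]
  rcases main with ⟨hA, hB⟩ | ⟨hC, hD⟩ | ⟨h00, h01, h10, h11⟩
  · have hu' : ∀ i : Fin 2, u i = 0 := by
      intro i; fin_cases i
      · exact conjz _ hA
      · exact conjz _ hB
    rw [hu', zero_mul, zero_mul]
  · have hv' : ∀ i : Fin 2, v i = 0 := by
      intro i; fin_cases i
      · exact conjz _ hC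
      · exact conjz _ hD
    rw [hv', mul_zero, zero_mul]
  · have hw' : ∀ p : Fin 2 × Fin 2, w p = 0 := by
      rintro ⟨i, j⟩
      fin_cases i <;> fin_cases j
      · exact conjz _ h00
      · exact conjz _ h01
      · exact conjz _ h10
      · exact conjz _ h11
    rw [hw', mul_zero]
end

section
/- If the systems A and B of the eight-element four-qubit product set S are merged into a single ℂ⁴ factor, the resulting set of eight pairwise orthogonal product vectors in ℂ²_C ⊗ ℂ²_D ⊗ ℂ⁴_{AB} IS an unextendible product basis of size eight: no nonzero product vector u ⊗ v ⊗ w (u, v ∈ ℂ², w ∈ ℂ⁴) is orthogonal to all eight members of the merged set. -/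
open scoped BigOperators

lemma two_eqs {a b c d x y : ℂ} (hdet : a*d - b*c ≠ 0)
    (h1 : a*x + b*y = 0) (h2 : c*x + d*y = 0) : x = 0 ∧ y = 0 := by
  constructor
  · have h : (a*d-b*c) * x = 0 := by linear_combination d*h1 - b*h2
    exact (mul_eq_zero.mp h).resolve_left hdet
  · have h : (a*d-b*c) * y = 0 := by linear_combination a*h2 - c*h1
    exact (mul_eq_zero.mp h).resolve_left hdet

lemma dz {a b : ℂ} (h : a = b) (hb : b ≠ 0) : a ≠ 0 := h ▸ hb

lemma mulne3 {a b c : ℂ} (h : a*b*c = 0) (ha : a ≠ 0) (hb : b ≠ 0) : c = 0 := by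
  rcases mul_eq_zero.mp h with h' | h'
  · rcases mul_eq_zero.mp h' with h'' | h''
    · exact absurd h'' ha
    · exact absurd h'' hb
  · exact h'

/-- Solve the full 2x2 systems (R0,T0) and (R1,T1) for W. -/
lemma solveW {c2 s2 W00 W01 W10 W11 : ℂ} (p2 : c2^2 + s2^2 = 1)
    (hR0 : c2*W00 + s2*W01 = 0) (hR1 : c2*W10 + s2*W11 = 0)
    (hT0 : s2*W00 - c2*W01 = 0) (hT1 : s2*W10 - c2*W11 = 0) :
    W00 = 0 ∧ W01 = 0 ∧ W10 = 0 ∧ W11 = 0 := by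
  have hdet : c2*(-c2) - s2*s2 ≠ 0 := dz (by linear_combination -p2) (neg_ne_zero.mpr one_ne_zero)
  obtain ⟨ha, hb⟩ := two_eqs hdet hR0 (by linear_combination hT0)
  obtain ⟨hc, hd⟩ := two_eqs hdet hR1 (by linear_combination hT1)
  exact ⟨ha, hb, hc, hd⟩

/-- From G5 = G6 = 0 get W01 = W11 = 0, then R0, R1 finish. -/
lemma solveW2 {c1 s1 c2 s2 W00 W01 W10 W11 : ℂ} (p1 : c1^2 + s1^2 = 1)
    (hc2 : c2 ≠ 0)
    (hG5 : s1*W01 - c1*W11 = 0) (hG6 : c1*W01 + s1*W11 = 0)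
    (hR0 : c2*W00 + s2*W01 = 0) (hR1 : c2*W10 + s2*W11 = 0) :
    W00 = 0 ∧ W01 = 0 ∧ W10 = 0 ∧ W11 = 0 := by
  have hdet : s1*s1 - (-c1)*c1 ≠ 0 := dz (by linear_combination p1) one_ne_zero
  obtain ⟨h01, h11⟩ := two_eqs hdet (by linear_combination hG5) hG6
  have h00 : W00 = 0 := by
    have : c2*W00 = 0 := by linear_combination hR0 - s2*h01
    exact (mul_eq_zero.mp this).resolve_left hc2
  have h10 : W10 = 0 := by
    have : c2*W10 = 0 := by linear_combination hR1 - s2*h11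
    exact (mul_eq_zero.mp this).resolve_left hc2
  exact ⟨h00, h01, h10, h11⟩

/-- From G4 = G7 = 0 get T0 = T1 = 0, then with R0, R1 finish. -/
lemma solveW3 {c1 s1 c2 s2 W00 W01 W10 W11 : ℂ} (p1 : c1^2 + s1^2 = 1) (p2 : c2^2 + s2^2 = 1)
    (hG4 : c1*(s2*W00 - c2*W01) + s1*(s2*W10 - c2*W11) = 0)
    (hG7 : s1*(s2*W00 - c2*W01) - c1*(s2*W10 - c2*W11) = 0)
    (hR0 : c2*W00 + s2*W01 = 0) (hR1 : c2*W10 + s2*W11 = 0) :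
    W00 = 0 ∧ W01 = 0 ∧ W10 = 0 ∧ W11 = 0 := by
  have hdet : c1*(-c1) - s1*s1 ≠ 0 := dz (by linear_combination -p1) (neg_ne_zero.mpr one_ne_zero)
  obtain ⟨hT0, hT1⟩ := two_eqs (x := s2*W00 - c2*W01) (y := s2*W10 - c2*W11) hdet
    (by linear_combination hG4) (by linear_combination hG7)
  exact solveW p2 hR0 hR1 hT0 hT1

lemma key_s5 (c1 s1 c2 s2 c3 s3 c4 s4 cy sy U0 U1 V0 V1 W00 W01 W10 W11 : ℂ)
    (hc1 : c1 ≠ 0) (hs1 : s1 ≠ 0) (hc2 : c2 ≠ 0) (hs2 : s2 ≠ 0)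
    (hc3 : c3 ≠ 0) (hs3 : s3 ≠ 0) (hc4 : c4 ≠ 0) (hs4 : s4 ≠ 0)
    (hcy : cy ≠ 0) (hsy : sy ≠ 0)
    (p1 : c1^2 + s1^2 = 1) (p2 : c2^2 + s2^2 = 1) (p3 : c3^2 + s3^2 = 1)
    (p4 : c4^2 + s4^2 = 1) (py : cy^2 + sy^2 = 1)
    (d1 : c4*sy - s4*cy ≠ 0) (d2 : c4*cy + s4*sy ≠ 0)
    (e0 : U0*V0*W00 = 0)
    (e1 : (s3*U0 - c3*U1) * (c4*V0 + s4*V1) * (c2*W10 + s2*W11) = 0)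
    (e2 : (s3*U0 - c3*U1) * V1 * (c2*W00 + s2*W01) = 0)
    (e3 : (s3*U0 - c3*U1) * (s4*V0 - c4*V1) * (c2*W10 + s2*W11) = 0)
    (e4 : U1 * (s4*V0 - c4*V1) * (c1*(s2*W00 - c2*W01) + s1*(s2*W10 - c2*W11)) = 0)
    (e5 : (c3*U0 + s3*U1) * (cy*V0 + sy*V1) * (s1*W01 - c1*W11) = 0)
    (e6 : (c3*U0 + s3*U1) * (c4*V0 + s4*V1) * (c1*W01 + s1*W11) = 0)
    (e7 : U1 * (sy*V0 - cy*V1) * (s1*(s2*W00 - c2*W01) - c1*(s2*W10 - c2*W11)) = 0) :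
    (U0 = 0 ∧ U1 = 0) ∨ (V0 = 0 ∧ V1 = 0) ∨ (W00 = 0 ∧ W01 = 0 ∧ W10 = 0 ∧ W11 = 0) := by
  by_cases hU : U0 = 0 ∧ U1 = 0
  · exact Or.inl hU
  by_cases hV : V0 = 0 ∧ V1 = 0
  · exact Or.inr (Or.inl hV)
  refine Or.inr (Or.inr ?_)
  -- generic "not both zero" for the u and v families
  have nbU : ∀ a b c d : ℂ, a*d - b*c ≠ 0 → a*U0 + b*U1 = 0 → c*U0 + d*U1 ≠ 0 :=
    fun a b c d hdet h1 h2 => hU (two_eqs hdet h1 h2)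
  have nbV : ∀ a b c d : ℂ, a*d - b*c ≠ 0 → a*V0 + b*V1 = 0 → c*V0 + d*V1 ≠ 0 :=
    fun a b c d hdet h1 h2 => hV (two_eqs hdet h1 h2)
  by_cases hP' : s3*U0 - c3*U1 = 0
  · -- Case B : P' = 0, hence U0, U1, P all nonzero
    have hU0 : U0 ≠ 0 := fun h =>
      nbU s3 (-c3) 1 0 (dz (by ring) hc3) (by linear_combination hP') (by linear_combination h) 
    have hU1 : U1 ≠ 0 := fun h =>
      nbU s3 (-c3) 0 1 (dz (by ring) hs3) (by linear_combination hP') (by linear_combination h)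
    have hP : c3*U0 + s3*U1 ≠ 0 :=
      nbU s3 (-c3) c3 s3 (dz (by linear_combination p3) one_ne_zero) (by linear_combination hP')
    -- reduced equations
    have f0 : V0 * W00 = 0 := by
      have : U0 * (V0 * W00) = 0 := by linear_combination e0
      exact (mul_eq_zero.mp this).resolve_left hU0
    have f4 : (s4*V0 - c4*V1) * (c1*(s2*W00 - c2*W01) + s1*(s2*W10 - c2*W11)) = 0 := by
      have : U1 * ((s4*V0 - c4*V1) * (c1*(s2*W00 - c2*W01) + s1*(s2*W10 - c2*W11))) = 0 := by
        linear_combination e4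
      exact (mul_eq_zero.mp this).resolve_left hU1
    have f5 : (cy*V0 + sy*V1) * (s1*W01 - c1*W11) = 0 := by
      have : (c3*U0 + s3*U1) * ((cy*V0 + sy*V1) * (s1*W01 - c1*W11)) = 0 := by
        linear_combination e5
      exact (mul_eq_zero.mp this).resolve_left hP
    have f6 : (c4*V0 + s4*V1) * (c1*W01 + s1*W11) = 0 := by
      have : (c3*U0 + s3*U1) * ((c4*V0 + s4*V1) * (c1*W01 + s1*W11)) = 0 := by
        linear_combination e6
      exact (mul_eq_zero.mp this).resolve_left hP
    have f7 : (sy*V0 - cy*V1) * (s1*(s2*W00 - c2*W01) - c1*(s2*W10 - c2*W11)) = 0 := by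
      have : U1 * ((sy*V0 - cy*V1) * (s1*(s2*W00 - c2*W01) - c1*(s2*W10 - c2*W11))) = 0 := by
        linear_combination e7
      exact (mul_eq_zero.mp this).resolve_left hU1
    by_cases hV0 : V0 = 0
    · -- all four G's vanish
      have hQ' : s4*V0 - c4*V1 ≠ 0 :=
        fun h => nbV 1 0 s4 (-c4) (dz (by ring) (neg_ne_zero.mpr hc4))
          (by linear_combination hV0) (by linear_combination h)
      have hQy : cy*V0 + sy*V1 ≠ 0 :=
        fun h => nbV 1 0 cy sy (dz (by ring) hsy) (by linear_combination hV0) h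
      have hQ : c4*V0 + s4*V1 ≠ 0 :=
        fun h => nbV 1 0 c4 s4 (dz (by ring) hs4) (by linear_combination hV0) h
      have hQy' : sy*V0 - cy*V1 ≠ 0 :=
        fun h => nbV 1 0 sy (-cy) (dz (by ring) (neg_ne_zero.mpr hcy))
          (by linear_combination hV0) (by linear_combination h)
      have hG4 := (mul_eq_zero.mp f4).resolve_left hQ'
      have hG5 := (mul_eq_zero.mp f5).resolve_left hQy
      have hG6 := (mul_eq_zero.mp f6).resolve_left hQ
      have hG7 := (mul_eq_zero.mp f7).resolve_left hQy'
      -- from G5, G6 : W01 = W11 = 0; then G4, G7 give W00 = W10 = 0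
      have hdet : s1*s1 - (-c1)*c1 ≠ 0 := dz (by linear_combination p1) one_ne_zero
      obtain ⟨h01, h11⟩ := two_eqs hdet (by linear_combination hG5) hG6
      have hdet2 : c1*(-c1) - s1*s1 ≠ 0 :=
        dz (by linear_combination -p1) (neg_ne_zero.mpr one_ne_zero)
      obtain ⟨hA, hB⟩ := two_eqs (x := s2*W00 - c2*W01) (y := s2*W10 - c2*W11) hdet2
        (by linear_combination hG4) (by linear_combination hG7)
      have h00 : W00 = 0 := by
        have : s2*W00 = 0 := by linear_combination hA + c2*h01
        exact (mul_eq_zero.mp this).resolve_left hs2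
      have h10 : W10 = 0 := by
        have : s2*W10 = 0 := by linear_combination hB + c2*h11
        exact (mul_eq_zero.mp this).resolve_left hs2
      exact ⟨h00, h01, h10, h11⟩
    · have h00 : W00 = 0 := (mul_eq_zero.mp f0).resolve_left hV0
      by_cases hQ' : s4*V0 - c4*V1 = 0
      · -- Q' = 0 : Qy, Q, Qy' nonzero, so G5 = G6 = G7 = 0
        have hQy : cy*V0 + sy*V1 ≠ 0 :=
          nbV s4 (-c4) cy sy (dz (by ring) d2) (by linear_combination hQ')
        have hQ : c4*V0 + s4*V1 ≠ 0 :=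
          nbV s4 (-c4) c4 s4 (dz (by linear_combination p4) one_ne_zero) (by linear_combination hQ')
        have hQy' : sy*V0 - cy*V1 ≠ 0 := fun h =>
          nbV s4 (-c4) sy (-cy) (dz (by ring) d1) (by linear_combination hQ') (by linear_combination h)
        have hG5 := (mul_eq_zero.mp f5).resolve_left hQy
        have hG6 := (mul_eq_zero.mp f6).resolve_left hQ
        have hG7 := (mul_eq_zero.mp f7).resolve_left hQy'
        have hdet : s1*s1 - (-c1)*c1 ≠ 0 := dz (by linear_combination p1) one_ne_zero
        obtain ⟨h01, h11⟩ := two_eqs hdet (by linear_combination hG5) hG6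
        have h10 : W10 = 0 := by
          have : c1*s2*W10 = 0 := by
            linear_combination -hG7 + s1*s2*h00 - s1*c2*h01 + c1*c2*h11
          exact (mul_eq_zero.mp this).resolve_left (mul_ne_zero hc1 hs2)
        exact ⟨h00, h01, h10, h11⟩
      · have hG4 := (mul_eq_zero.mp f4).resolve_left hQ'
        by_cases hQy : cy*V0 + sy*V1 = 0
        · -- Qy = 0 : Q, Qy' nonzero so G6 = G7 = 0
          have hQ : c4*V0 + s4*V1 ≠ 0 := fun h =>
            nbV cy sy c4 s4 (dz (by ring) (neg_ne_zero.mpr d1)) hQy h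
          have hQy' : sy*V0 - cy*V1 ≠ 0 := fun h =>
            nbV cy sy sy (-cy) (dz (by linear_combination -py) (neg_ne_zero.mpr one_ne_zero))
              hQy (by linear_combination h)
          have hG6 := (mul_eq_zero.mp f6).resolve_left hQ
          have hG7 := (mul_eq_zero.mp f7).resolve_left hQy'
          -- unknowns: treat (W01, T1) with G4, G7 (using W00 = 0)
          have hdet : (-(c1*c2))*(-c1) - s1*(-(s1*c2)) ≠ 0 :=
            dz (by linear_combination c2*p1) hc2
          obtain ⟨h01, hT1⟩ := two_eqs (x := W01) (y := s2*W10 - c2*W11) hdet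
            (by linear_combination hG4 - c1*s2*h00)
            (by linear_combination hG7 - s1*s2*h00)
          have h11 : W11 = 0 := by
            have : s1*W11 = 0 := by linear_combination hG6 - c1*h01
            exact (mul_eq_zero.mp this).resolve_left hs1
          have h10 : W10 = 0 := by
            have : s2*W10 = 0 := by linear_combination hT1 + c2*h11
            exact (mul_eq_zero.mp this).resolve_left hs2
          exact ⟨h00, h01, h10, h11⟩
        · have hG5 := (mul_eq_zero.mp f5).resolve_left hQy
          by_cases hQ : c4*V0 + s4*V1 = 0
          · -- Q = 0 : Qy' nonzero so G7 = 0 ; have G4, G5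
            have hQy' : sy*V0 - cy*V1 ≠ 0 := fun h =>
              nbV c4 s4 sy (-cy) (dz (by ring) (neg_ne_zero.mpr d2)) hQ (by linear_combination h)
            have hG7 := (mul_eq_zero.mp f7).resolve_left hQy'
            have hdet2 : c1*(-c1) - s1*s1 ≠ 0 :=
              dz (by linear_combination -p1) (neg_ne_zero.mpr one_ne_zero)
            obtain ⟨hT0, hT1⟩ := two_eqs (x := s2*W00 - c2*W01) (y := s2*W10 - c2*W11) hdet2
              (by linear_combination hG4) (by linear_combination hG7)
            have h01 : W01 = 0 := by
              have : c2*W01 = 0 := by linear_combination -hT0 + s2*h00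
              exact (mul_eq_zero.mp this).resolve_left hc2
            have h11 : W11 = 0 := by
              have : c1*W11 = 0 := by linear_combination -hG5 + s1*h01
              exact (mul_eq_zero.mp this).resolve_left hc1
            have h10 : W10 = 0 := by
              have : s2*W10 = 0 := by linear_combination hT1 + c2*h11
              exact (mul_eq_zero.mp this).resolve_left hs2
            exact ⟨h00, h01, h10, h11⟩
          · have hG6 := (mul_eq_zero.mp f6).resolve_left hQ
            -- have G4, G5, G6 regardless of Qy'
            have hdet : s1*s1 - (-c1)*c1 ≠ 0 := dz (by linear_combination p1) one_ne_zero
            obtain ⟨h01, h11⟩ := two_eqs hdet (by linear_combination hG5) hG6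
            have h10 : W10 = 0 := by
              have : s1*s2*W10 = 0 := by
                linear_combination hG4 - c1*s2*h00 + c1*c2*h01 + s1*c2*h11
              exact (mul_eq_zero.mp this).resolve_left (mul_ne_zero hs1 hs2)
            exact ⟨h00, h01, h10, h11⟩
  · -- Case A : P' ≠ 0
    have f1 : (c4*V0 + s4*V1) * (c2*W10 + s2*W11) = 0 := by
      have : (s3*U0 - c3*U1) * ((c4*V0 + s4*V1) * (c2*W10 + s2*W11)) = 0 := by
        linear_combination e1
      exact (mul_eq_zero.mp this).resolve_left hP'
    have f2 : V1 * (c2*W00 + s2*W01) = 0 := by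
      have : (s3*U0 - c3*U1) * (V1 * (c2*W00 + s2*W01)) = 0 := by linear_combination e2
      exact (mul_eq_zero.mp this).resolve_left hP'
    have f3 : (s4*V0 - c4*V1) * (c2*W10 + s2*W11) = 0 := by
      have : (s3*U0 - c3*U1) * ((s4*V0 - c4*V1) * (c2*W10 + s2*W11)) = 0 := by
        linear_combination e3
      exact (mul_eq_zero.mp this).resolve_left hP'
    by_cases hQ : c4*V0 + s4*V1 = 0
    · -- Q = 0 : all other v-forms nonzero
      have hV0 : V0 ≠ 0 := fun h =>
        nbV c4 s4 1 0 (dz (by ring) (neg_ne_zero.mpr hs4)) hQ (by linear_combination h)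
      have hV1 : V1 ≠ 0 := fun h =>
        nbV c4 s4 0 1 (dz (by ring) hc4) hQ (by linear_combination h)
      have hQ' : s4*V0 - c4*V1 ≠ 0 := fun h =>
        nbV c4 s4 s4 (-c4) (dz (by linear_combination -p4) (neg_ne_zero.mpr one_ne_zero))
          hQ (by linear_combination h)
      have hQy : cy*V0 + sy*V1 ≠ 0 := nbV c4 s4 cy sy (dz (by ring) d1) hQ
      have hQy' : sy*V0 - cy*V1 ≠ 0 := fun h =>
        nbV c4 s4 sy (-cy) (dz (by ring) (neg_ne_zero.mpr d2)) hQ (by linear_combination h)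
      have hR1 := (mul_eq_zero.mp f3).resolve_left hQ'
      have hR0 := (mul_eq_zero.mp f2).resolve_left hV1
      by_cases hU1 : U1 = 0
      · have hU0 : U0 ≠ 0 := fun h => hU ⟨h, hU1⟩
        have hP : c3*U0 + s3*U1 ≠ 0 := fun h =>
          nbU 0 1 c3 s3 (dz (by ring) (neg_ne_zero.mpr hc3)) (by linear_combination hU1) h
        have h00 : W00 = 0 := mulne3 e0 hU0 hV0
        have hG5 : s1*W01 - c1*W11 = 0 := mulne3 e5 hP hQy
        have h01 : W01 = 0 := by
          have : s2*W01 = 0 := by linear_combination hR0 - c2*h00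
          exact (mul_eq_zero.mp this).resolve_left hs2
        have h11 : W11 = 0 := by
          have : c1*W11 = 0 := by linear_combination -hG5 + s1*h01
          exact (mul_eq_zero.mp this).resolve_left hc1
        have h10 : W10 = 0 := by
          have : c2*W10 = 0 := by linear_combination hR1 - s2*h11
          exact (mul_eq_zero.mp this).resolve_left hc2
        exact ⟨h00, h01, h10, h11⟩
      · have hG4 := mulne3 e4 hU1 hQ'
        have hG7 := mulne3 e7 hU1 hQy'
        exact solveW3 p1 p2 hG4 hG7 hR0 hR1
    · by_cases hQ'0 : s4*V0 - c4*V1 = 0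
      · -- Q' = 0
        have hR1 := (mul_eq_zero.mp f1).resolve_left hQ
        have hV0 : V0 ≠ 0 := fun h =>
          nbV s4 (-c4) 1 0 (dz (by ring) hc4) (by linear_combination hQ'0) (by linear_combination h)
        have hV1 : V1 ≠ 0 := fun h =>
          nbV s4 (-c4) 0 1 (dz (by ring) hs4) (by linear_combination hQ'0) (by linear_combination h)
        have hQy : cy*V0 + sy*V1 ≠ 0 := nbV s4 (-c4) cy sy (dz (by ring) d2) (by linear_combination hQ'0)
        have hQy' : sy*V0 - cy*V1 ≠ 0 := fun h =>
          nbV s4 (-c4) sy (-cy) (dz (by ring) d1) (by linear_combination hQ'0) (by linear_combination h)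
        have hR0 := (mul_eq_zero.mp f2).resolve_left hV1
        by_cases hU1 : U1 = 0
        · have hU0 : U0 ≠ 0 := fun h => hU ⟨h, hU1⟩
          have hP : c3*U0 + s3*U1 ≠ 0 := fun h =>
            nbU 0 1 c3 s3 (dz (by ring) (neg_ne_zero.mpr hc3)) (by linear_combination hU1) h
          have hG5 : s1*W01 - c1*W11 = 0 := mulne3 e5 hP hQy
          have hG6 : c1*W01 + s1*W11 = 0 := mulne3 e6 hP hQ
          exact solveW2 p1 hc2 hG5 hG6 hR0 hR1
        · have hG7 := mulne3 e7 hU1 hQy'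
          by_cases hP : c3*U0 + s3*U1 = 0
          · have hU0 : U0 ≠ 0 := fun h =>
              nbU c3 s3 1 0 (dz (by ring) (neg_ne_zero.mpr hs3)) hP (by linear_combination h)
            have h00 : W00 = 0 := mulne3 e0 hU0 hV0
            have h01 : W01 = 0 := by
              have : s2*W01 = 0 := by linear_combination hR0 - c2*h00
              exact (mul_eq_zero.mp this).resolve_left hs2
            have hT1 : s2*W10 - c2*W11 = 0 := by
              have : c1*(s2*W10 - c2*W11) = 0 := by
                linear_combination -hG7 + s1*s2*h00 - s1*c2*h01
              exact (mul_eq_zero.mp this).resolve_left hc1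
            obtain ⟨h10, h11⟩ : W10 = 0 ∧ W11 = 0 := by
              have hdet : c2*(-c2) - s2*s2 ≠ 0 :=
                dz (by linear_combination -p2) (neg_ne_zero.mpr one_ne_zero)
              exact two_eqs hdet hR1 (by linear_combination hT1)
            exact ⟨h00, h01, h10, h11⟩
          · have hG5 : s1*W01 - c1*W11 = 0 := mulne3 e5 hP hQy
            have hG6 : c1*W01 + s1*W11 = 0 := mulne3 e6 hP hQ
            exact solveW2 p1 hc2 hG5 hG6 hR0 hR1
      · -- Q ≠ 0, Q' ≠ 0
        have hR1 := (mul_eq_zero.mp f1).resolve_left hQ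
        by_cases hV1 : V1 = 0
        · have hV0 : V0 ≠ 0 := fun h => hV ⟨h, hV1⟩
          have hQy : cy*V0 + sy*V1 ≠ 0 := fun h =>
            nbV 0 1 cy sy (dz (by ring) (neg_ne_zero.mpr hcy)) (by linear_combination hV1) h
          have hQy' : sy*V0 - cy*V1 ≠ 0 := fun h =>
            nbV 0 1 sy (-cy) (dz (by ring) (neg_ne_zero.mpr hsy)) (by linear_combination hV1)
              (by linear_combination h)
          by_cases hU1 : U1 = 0
          · have hU0 : U0 ≠ 0 := fun h => hU ⟨h, hU1⟩
            have hP : c3*U0 + s3*U1 ≠ 0 := fun h =>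
              nbU 0 1 c3 s3 (dz (by ring) (neg_ne_zero.mpr hc3)) (by linear_combination hU1) h
            have h00 : W00 = 0 := mulne3 e0 hU0 hV0
            have hG5 : s1*W01 - c1*W11 = 0 := mulne3 e5 hP hQy
            have hG6 : c1*W01 + s1*W11 = 0 := mulne3 e6 hP hQ
            have hdet : s1*s1 - (-c1)*c1 ≠ 0 := dz (by linear_combination p1) one_ne_zero
            obtain ⟨h01, h11⟩ := two_eqs hdet (by linear_combination hG5) hG6
            have h10 : W10 = 0 := by
              have : c2*W10 = 0 := by linear_combination hR1 - s2*h11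
              exact (mul_eq_zero.mp this).resolve_left hc2
            exact ⟨h00, h01, h10, h11⟩
          · have hG4 := mulne3 e4 hU1 hQ'0
            have hG7 := mulne3 e7 hU1 hQy'
            have hdet2 : c1*(-c1) - s1*s1 ≠ 0 :=
              dz (by linear_combination -p1) (neg_ne_zero.mpr one_ne_zero)
            obtain ⟨hT0, hT1⟩ := two_eqs (x := s2*W00 - c2*W01) (y := s2*W10 - c2*W11) hdet2
              (by linear_combination hG4) (by linear_combination hG7)
            obtain ⟨h10, h11⟩ : W10 = 0 ∧ W11 = 0 := by
              have hdet : c2*(-c2) - s2*s2 ≠ 0 :=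
                dz (by linear_combination -p2) (neg_ne_zero.mpr one_ne_zero)
              exact two_eqs hdet hR1 (by linear_combination hT1)
            by_cases hU0 : U0 = 0
            · have hP : c3*U0 + s3*U1 ≠ 0 := fun h =>
                nbU 1 0 c3 s3 (dz (by ring) hs3) (by linear_combination hU0) h
              have hG5 : s1*W01 - c1*W11 = 0 := mulne3 e5 hP hQy
              have h01 : W01 = 0 := by
                have : s1*W01 = 0 := by linear_combination hG5 + c1*h11
                exact (mul_eq_zero.mp this).resolve_left hs1
              have h00 : W00 = 0 := by
                have : s2*W00 = 0 := by linear_combination hT0 + c2*h01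
                exact (mul_eq_zero.mp this).resolve_left hs2
              exact ⟨h00, h01, h10, h11⟩
            · have h00 : W00 = 0 := mulne3 e0 hU0 hV0
              have h01 : W01 = 0 := by
                have : c2*W01 = 0 := by linear_combination -hT0 + s2*h00
                exact (mul_eq_zero.mp this).resolve_left hc2
              exact ⟨h00, h01, h10, h11⟩
        · have hR0 := (mul_eq_zero.mp f2).resolve_left hV1
          by_cases hU1 : U1 = 0
          · have hU0 : U0 ≠ 0 := fun h => hU ⟨h, hU1⟩
            have hP : c3*U0 + s3*U1 ≠ 0 := fun h =>
              nbU 0 1 c3 s3 (dz (by ring) (neg_ne_zero.mpr hc3)) (by linear_combination hU1) h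
            by_cases hQy : cy*V0 + sy*V1 = 0
            · have hV0 : V0 ≠ 0 := fun h =>
                nbV cy sy 1 0 (dz (by ring) (neg_ne_zero.mpr hsy)) hQy (by linear_combination h)
              have h00 : W00 = 0 := mulne3 e0 hU0 hV0
              have h01 : W01 = 0 := by
                have : s2*W01 = 0 := by linear_combination hR0 - c2*h00
                exact (mul_eq_zero.mp this).resolve_left hs2
              have hG6 : c1*W01 + s1*W11 = 0 := mulne3 e6 hP hQ
              have h11 : W11 = 0 := by
                have : s1*W11 = 0 := by linear_combination hG6 - c1*h01
                exact (mul_eq_zero.mp this).resolve_left hs1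
              have h10 : W10 = 0 := by
                have : c2*W10 = 0 := by linear_combination hR1 - s2*h11
                exact (mul_eq_zero.mp this).resolve_left hc2
              exact ⟨h00, h01, h10, h11⟩
            · have hG5 : s1*W01 - c1*W11 = 0 := mulne3 e5 hP hQy
              have hG6 : c1*W01 + s1*W11 = 0 := mulne3 e6 hP hQ
              exact solveW2 p1 hc2 hG5 hG6 hR0 hR1
          · have hG4 := mulne3 e4 hU1 hQ'0
            by_cases hQy' : sy*V0 - cy*V1 = 0
            · have hQy : cy*V0 + sy*V1 ≠ 0 :=
                nbV sy (-cy) cy sy (dz (by linear_combination py) one_ne_zero) (by linear_combination hQy')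
              have hV0 : V0 ≠ 0 := fun h =>
                nbV sy (-cy) 1 0 (dz (by ring) hcy) (by linear_combination hQy') (by linear_combination h)
              by_cases hP : c3*U0 + s3*U1 = 0
              · have hU0 : U0 ≠ 0 := fun h =>
                  nbU c3 s3 1 0 (dz (by ring) (neg_ne_zero.mpr hs3)) hP (by linear_combination h)
                have h00 : W00 = 0 := mulne3 e0 hU0 hV0
                have h01 : W01 = 0 := by
                  have : s2*W01 = 0 := by linear_combination hR0 - c2*h00
                  exact (mul_eq_zero.mp this).resolve_left hs2
                have hT1 : s2*W10 - c2*W11 = 0 := by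
                  have : s1*(s2*W10 - c2*W11) = 0 := by
                    linear_combination hG4 - c1*s2*h00 + c1*c2*h01
                  exact (mul_eq_zero.mp this).resolve_left hs1
                obtain ⟨h10, h11⟩ : W10 = 0 ∧ W11 = 0 := by
                  have hdet : c2*(-c2) - s2*s2 ≠ 0 :=
                    dz (by linear_combination -p2) (neg_ne_zero.mpr one_ne_zero)
                  exact two_eqs hdet hR1 (by linear_combination hT1)
                exact ⟨h00, h01, h10, h11⟩
              · have hG5 : s1*W01 - c1*W11 = 0 := mulne3 e5 hP hQy
                have hG6 : c1*W01 + s1*W11 = 0 := mulne3 e6 hP hQ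
                exact solveW2 p1 hc2 hG5 hG6 hR0 hR1
            · have hG7 := mulne3 e7 hU1 hQy'
              exact solveW3 p1 p2 hG4 hG7 hR0 hR1

/-- Merging systems A and B of the four-qubit product set `S` into a single `ℂ⁴` factor, the resulting set of eight orthogonal product vectors in `ℂ²_C ⊗ ℂ²_D ⊗ ℂ⁴_{AB}` IS an unextendible product basis of size eight: no nonzero product vector `u ⊗ v ⊗ w` is orthogonal to all eight members. -/
theorem stmt5 (x₁ x₂ x₃ x₄ y₄ : ℝ)
    (hx₁ : x₁ ∈ Set.Ioo 0 (Real.pi / 2)) (hx₂ : x₂ ∈ Set.Ioo 0 (Real.pi / 2))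
    (hx₃ : x₃ ∈ Set.Ioo 0 (Real.pi / 2)) (hx₄ : x₄ ∈ Set.Ioo 0 (Real.pi / 2))
    (hy₄ : y₄ ∈ Set.Ioo 0 (Real.pi / 2)) (hne : x₄ ≠ y₄) :
    ∀ (u v : Fin 2 → ℂ) (w : Fin 2 × Fin 2 → ℂ),
      (∀ k : Fin 8, ip4 (fun x : Fin 2 × Fin 2 × Fin 2 × Fin 2 => u x.2.2.1 * v x.2.2.2 * w (x.1, x.2.1)) (S4 x₁ x₂ x₃ x₄ y₄ k) = 0) →
      (fun x : Fin 2 × Fin 2 × Fin 2 × Fin 2 => u x.2.2.1 * v x.2.2.2 * w (x.1, x.2.1)) = 0 := by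
  intro u v w h
  obtain ⟨hx1a, hx1b⟩ := hx₁
  obtain ⟨hx2a, hx2b⟩ := hx₂
  obtain ⟨hx3a, hx3b⟩ := hx₃
  obtain ⟨hx4a, hx4b⟩ := hx₄
  obtain ⟨hy4a, hy4b⟩ := hy₄
  have hpi := Real.pi_pos
  have hc1 : (Real.cos x₁ : ℂ) ≠ 0 := Complex.ofReal_ne_zero.mpr
    (ne_of_gt (Real.cos_pos_of_mem_Ioo ⟨by linarith, hx1b⟩))
  have hc2 : (Real.cos x₂ : ℂ) ≠ 0 := Complex.ofReal_ne_zero.mpr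
    (ne_of_gt (Real.cos_pos_of_mem_Ioo ⟨by linarith, hx2b⟩))
  have hc3 : (Real.cos x₃ : ℂ) ≠ 0 := Complex.ofReal_ne_zero.mpr
    (ne_of_gt (Real.cos_pos_of_mem_Ioo ⟨by linarith, hx3b⟩))
  have hc4 : (Real.cos x₄ : ℂ) ≠ 0 := Complex.ofReal_ne_zero.mpr
    (ne_of_gt (Real.cos_pos_of_mem_Ioo ⟨by linarith, hx4b⟩))
  have hcy : (Real.cos y₄ : ℂ) ≠ 0 := Complex.ofReal_ne_zero.mpr
    (ne_of_gt (Real.cos_pos_of_mem_Ioo ⟨by linarith, hy4b⟩))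
  have hs1 : (Real.sin x₁ : ℂ) ≠ 0 := Complex.ofReal_ne_zero.mpr
    (ne_of_gt (Real.sin_pos_of_pos_of_lt_pi hx1a (by linarith)))
  have hs2 : (Real.sin x₂ : ℂ) ≠ 0 := Complex.ofReal_ne_zero.mpr
    (ne_of_gt (Real.sin_pos_of_pos_of_lt_pi hx2a (by linarith)))
  have hs3 : (Real.sin x₃ : ℂ) ≠ 0 := Complex.ofReal_ne_zero.mpr
    (ne_of_gt (Real.sin_pos_of_pos_of_lt_pi hx3a (by linarith)))
  have hs4 : (Real.sin x₄ : ℂ) ≠ 0 := Complex.ofReal_ne_zero.mpr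
    (ne_of_gt (Real.sin_pos_of_pos_of_lt_pi hx4a (by linarith)))
  have hsy : (Real.sin y₄ : ℂ) ≠ 0 := Complex.ofReal_ne_zero.mpr
    (ne_of_gt (Real.sin_pos_of_pos_of_lt_pi hy4a (by linarith)))
  have p1 : (Real.cos x₁ : ℂ)^2 + (Real.sin x₁ : ℂ)^2 = 1 := by
    exact_mod_cast Real.cos_sq_add_sin_sq x₁
  have p2 : (Real.cos x₂ : ℂ)^2 + (Real.sin x₂ : ℂ)^2 = 1 := by
    exact_mod_cast Real.cos_sq_add_sin_sq x₂
  have p3 : (Real.cos x₃ : ℂ)^2 + (Real.sin x₃ : ℂ)^2 = 1 := by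
    exact_mod_cast Real.cos_sq_add_sin_sq x₃
  have p4 : (Real.cos x₄ : ℂ)^2 + (Real.sin x₄ : ℂ)^2 = 1 := by
    exact_mod_cast Real.cos_sq_add_sin_sq x₄
  have py : (Real.cos y₄ : ℂ)^2 + (Real.sin y₄ : ℂ)^2 = 1 := by
    exact_mod_cast Real.cos_sq_add_sin_sq y₄
  have hsd : Real.sin (y₄ - x₄) ≠ 0 := fun hzero =>
    (sub_ne_zero.mpr (Ne.symm hne))
      ((Real.sin_eq_zero_iff_of_lt_of_lt (by linarith) (by linarith)).mp hzero)
  have d1 : (Real.cos x₄ : ℂ) * (Real.sin y₄ : ℂ) - (Real.sin x₄ : ℂ) * (Real.cos y₄ : ℂ) ≠ 0 := by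
    intro hcon
    apply hsd
    have hr : Real.cos x₄ * Real.sin y₄ - Real.sin x₄ * Real.cos y₄ = 0 := by
      exact_mod_cast hcon
    rw [Real.sin_sub]; linarith
  have d2 : (Real.cos x₄ : ℂ) * (Real.cos y₄ : ℂ) + (Real.sin x₄ : ℂ) * (Real.sin y₄ : ℂ) ≠ 0 := by
    have hcd : Real.cos (y₄ - x₄) ≠ 0 :=
      ne_of_gt (Real.cos_pos_of_mem_Ioo ⟨by linarith, by linarith⟩)
    intro hcon
    apply hcd
    have hr : Real.cos x₄ * Real.cos y₄ + Real.sin x₄ * Real.sin y₄ = 0 := by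
      exact_mod_cast hcon
    rw [Real.cos_sub]; linarith
  -- scalar shorthand
  set c1 := (Real.cos x₁ : ℂ); set s1 := (Real.sin x₁ : ℂ)
  set c2 := (Real.cos x₂ : ℂ); set s2 := (Real.sin x₂ : ℂ)
  set c3 := (Real.cos x₃ : ℂ); set s3 := (Real.sin x₃ : ℂ)
  set c4 := (Real.cos x₄ : ℂ); set s4 := (Real.sin x₄ : ℂ)
  set cy := (Real.cos y₄ : ℂ); set sy := (Real.sin y₄ : ℂ)
  set U0 := (starRingEnd ℂ) (u 0); set U1 := (starRingEnd ℂ) (u 1)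
  set V0 := (starRingEnd ℂ) (v 0); set V1 := (starRingEnd ℂ) (v 1)
  set W00 := (starRingEnd ℂ) (w (0,0)); set W01 := (starRingEnd ℂ) (w (0,1))
  set W10 := (starRingEnd ℂ) (w (1,0)); set W11 := (starRingEnd ℂ) (w (1,1))
  -- the eight scalar orthogonality equations
  have e0 : U0*V0*W00 = 0 := by
    have h0 : ip4 (fun x : Fin 2 × Fin 2 × Fin 2 × Fin 2 =>
        u x.2.2.1 * v x.2.2.2 * w (x.1, x.2.1)) (tp4 ket0 ket0 ket0 ket0) = 0 := h 0
    simp only [ip4, tp4, ket0, ket1, ketp, ketm, Fintype.sum_prod_type, Fin.sum_univ_two,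
      Matrix.cons_val_zero, Matrix.cons_val_one, Matrix.head_cons, map_mul] at h0
    linear_combination h0
  have e1 : (s3*U0 - c3*U1) * (c4*V0 + s4*V1) * (c2*W10 + s2*W11) = 0 := by
    have h0 : ip4 (fun x : Fin 2 × Fin 2 × Fin 2 × Fin 2 =>
        u x.2.2.1 * v x.2.2.2 * w (x.1, x.2.1)) (tp4 ket1 (ketp x₂) (ketm x₃) (ketp x₄)) = 0 := h 1
    simp only [ip4, tp4, ket0, ket1, ketp, ketm, Fintype.sum_prod_type, Fin.sum_univ_two,
      Matrix.cons_val_zero, Matrix.cons_val_one, Matrix.head_cons, map_mul] at h0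
    linear_combination h0
  have e2 : (s3*U0 - c3*U1) * V1 * (c2*W00 + s2*W01) = 0 := by
    have h0 : ip4 (fun x : Fin 2 × Fin 2 × Fin 2 × Fin 2 =>
        u x.2.2.1 * v x.2.2.2 * w (x.1, x.2.1)) (tp4 ket0 (ketp x₂) (ketm x₃) ket1) = 0 := h 2
    simp only [ip4, tp4, ket0, ket1, ketp, ketm, Fintype.sum_prod_type, Fin.sum_univ_two,
      Matrix.cons_val_zero, Matrix.cons_val_one, Matrix.head_cons, map_mul] at h0
    linear_combination h0
  have e3 : (s3*U0 - c3*U1) * (s4*V0 - c4*V1) * (c2*W10 + s2*W11) = 0 := by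
    have h0 : ip4 (fun x : Fin 2 × Fin 2 × Fin 2 × Fin 2 =>
        u x.2.2.1 * v x.2.2.2 * w (x.1, x.2.1)) (tp4 ket1 (ketp x₂) (ketm x₃) (ketm x₄)) = 0 := h 3
    simp only [ip4, tp4, ket0, ket1, ketp, ketm, Fintype.sum_prod_type, Fin.sum_univ_two,
      Matrix.cons_val_zero, Matrix.cons_val_one, Matrix.head_cons, map_mul] at h0
    linear_combination h0
  have e4 : U1 * (s4*V0 - c4*V1) * (c1*(s2*W00 - c2*W01) + s1*(s2*W10 - c2*W11)) = 0 := by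
    have h0 : ip4 (fun x : Fin 2 × Fin 2 × Fin 2 × Fin 2 =>
        u x.2.2.1 * v x.2.2.2 * w (x.1, x.2.1)) (tp4 (ketp x₁) (ketm x₂) ket1 (ketm x₄)) = 0 := h 4
    simp only [ip4, tp4, ket0, ket1, ketp, ketm, Fintype.sum_prod_type, Fin.sum_univ_two,
      Matrix.cons_val_zero, Matrix.cons_val_one, Matrix.head_cons, map_mul] at h0
    linear_combination h0
  have e5 : (c3*U0 + s3*U1) * (cy*V0 + sy*V1) * (s1*W01 - c1*W11) = 0 := by
    have h0 : ip4 (fun x : Fin 2 × Fin 2 × Fin 2 × Fin 2 =>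
        u x.2.2.1 * v x.2.2.2 * w (x.1, x.2.1)) (tp4 (ketm x₁) ket1 (ketp x₃) (ketp y₄)) = 0 := h 5
    simp only [ip4, tp4, ket0, ket1, ketp, ketm, Fintype.sum_prod_type, Fin.sum_univ_two,
      Matrix.cons_val_zero, Matrix.cons_val_one, Matrix.head_cons, map_mul] at h0
    linear_combination h0
  have e6 : (c3*U0 + s3*U1) * (c4*V0 + s4*V1) * (c1*W01 + s1*W11) = 0 := by
    have h0 : ip4 (fun x : Fin 2 × Fin 2 × Fin 2 × Fin 2 =>
        u x.2.2.1 * v x.2.2.2 * w (x.1, x.2.1)) (tp4 (ketp x₁) ket1 (ketp x₃) (ketp x₄)) = 0 := h 6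
    simp only [ip4, tp4, ket0, ket1, ketp, ketm, Fintype.sum_prod_type, Fin.sum_univ_two,
      Matrix.cons_val_zero, Matrix.cons_val_one, Matrix.head_cons, map_mul] at h0
    linear_combination h0
  have e7 : U1 * (sy*V0 - cy*V1) * (s1*(s2*W00 - c2*W01) - c1*(s2*W10 - c2*W11)) = 0 := by
    have h0 : ip4 (fun x : Fin 2 × Fin 2 × Fin 2 × Fin 2 =>
        u x.2.2.1 * v x.2.2.2 * w (x.1, x.2.1)) (tp4 (ketm x₁) (ketm x₂) ket1 (ketm y₄)) = 0 := h 7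
    simp only [ip4, tp4, ket0, ket1, ketp, ketm, Fintype.sum_prod_type, Fin.sum_univ_two,
      Matrix.cons_val_zero, Matrix.cons_val_one, Matrix.head_cons, map_mul] at h0
    linear_combination h0
  have K := key_s5 c1 s1 c2 s2 c3 s3 c4 s4 cy sy U0 U1 V0 V1 W00 W01 W10 W11
    hc1 hs1 hc2 hs2 hc3 hs3 hc4 hs4 hcy hsy p1 p2 p3 p4 py d1 d2 e0 e1 e2 e3 e4 e5 e6 e7
  have conj0 : ∀ z : ℂ, (starRingEnd ℂ) z = 0 → z = 0 := by
    intro z hz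
    simpa using congrArg (starRingEnd ℂ) hz
  funext x
  obtain ⟨a, b, c, d⟩ := x
  show u c * v d * w (a, b) = 0
  rcases K with ⟨h1, h2⟩ | ⟨h1, h2⟩ | ⟨h1, h2, h3, h4⟩
  · have hu0 : u 0 = 0 := conj0 _ h1
    have hu1 : u 1 = 0 := conj0 _ h2
    have hc : u c = 0 := by
      fin_cases c
      · exact hu0
      · exact hu1
    rw [hc, zero_mul, zero_mul]
  · have hv0 : v 0 = 0 := conj0 _ h1
    have hv1 : v 1 = 0 := conj0 _ h2
    have hd : v d = 0 := by
      fin_cases d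
      · exact hv0
      · exact hv1
    rw [hd, mul_zero, zero_mul]
  · have g1 : w (0,0) = 0 := conj0 _ h1
    have g2 : w (0,1) = 0 := conj0 _ h2
    have g3 : w (1,0) = 0 := conj0 _ h3
    have g4 : w (1,1) = 0 := conj0 _ h4
    have hw : w (a, b) = 0 := by
      fin_cases a <;> fin_cases b
      · exact g1
      · exact g2
      · exact g3
      · exact g4
    rw [hw, mul_zero]
end

section
/- If the systems A and B of the eight-element five-qubit product set T are merged into a single ℂ⁴ factor, the resulting set of eight pairwise orthogonal product vectors in ℂ²_C ⊗ ℂ²_D ⊗ ℂ²_E ⊗ ℂ⁴_{AB} is NOT an unextendible product basis: there exists a nonzero product vector u ⊗ v ⊗ w ⊗ y (u,v,w ∈ ℂ², y ∈ ℂ⁴) orthogonal to all eight members of the merged set. (In fact u = |1⟩, v = a₄', w = a₅, and y may be chosen orthogonal to a₁⊗a₂, |1⟩⊗a₂' and a₁'⊗|1⟩.) -/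
open scoped BigOperators

/-- Tensor product of five qubit vectors, as a function on the five-qubit index set. -/
noncomputable def tp5 (p q r s t : Fin 2 → ℂ) : Fin 2 × Fin 2 × Fin 2 × Fin 2 × Fin 2 → ℂ :=
  fun x => p x.1 * q x.2.1 * r x.2.2.1 * s x.2.2.2.1 * t x.2.2.2.2

/-- Standard (conjugate-linear in the first slot) inner product on the five-qubit space. -/
noncomputable def ip5 (f g : Fin 2 × Fin 2 × Fin 2 × Fin 2 × Fin 2 → ℂ) : ℂ :=
  ∑ x, (starRingEnd ℂ) (f x) * g x

/-- The eight members of the five-qubit product set `T`, with (A,B,C,D,E) components as in the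
paper: rows `(0,0,0,0,0)`, `(0,0,1,a₄,a₅)`, `(a₁,a₂,a₃,1,a₅')`, `(a₁,a₂,a₃',a₄',1)`,
`(1,a₂',b₃,b₄,b₅)`, `(1,a₂',b₃',c₄,c₅)`, `(a₁',1,c₃,b₄',c₅')`, `(a₁',1,c₃',c₄',b₅')`. -/
noncomputable def T5 (x₁ x₂ x₃ x₄ x₅ y₃ y₄ y₅ w₃ w₄ w₅ : ℝ) :
    Fin 8 → (Fin 2 × Fin 2 × Fin 2 × Fin 2 × Fin 2 → ℂ) :=
  ![tp5 ket0 ket0 ket0 ket0 ket0,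
    tp5 ket0 ket0 ket1 (ketp x₄) (ketp x₅),
    tp5 (ketp x₁) (ketp x₂) (ketp x₃) ket1 (ketm x₅),
    tp5 (ketp x₁) (ketp x₂) (ketm x₃) (ketm x₄) ket1,
    tp5 ket1 (ketm x₂) (ketp y₃) (ketp y₄) (ketp y₅),
    tp5 ket1 (ketm x₂) (ketm y₃) (ketp w₄) (ketp w₅),
    tp5 (ketm x₁) ket1 (ketp w₃) (ketm y₄) (ketm w₅),
    tp5 (ketm x₁) ket1 (ketm w₃) (ketm w₄) (ketm y₅)]


lemma ip5_prod (u v w : Fin 2 → ℂ) (y : Fin 2 × Fin 2 → ℂ) (p q r s t : Fin 2 → ℂ) :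
    ip5 (fun x : Fin 2 × Fin 2 × Fin 2 × Fin 2 × Fin 2 =>
        u x.2.2.1 * v x.2.2.2.1 * w x.2.2.2.2 * y (x.1, x.2.1)) (tp5 p q r s t)
      = (∑ i : Fin 2, ∑ j : Fin 2, (starRingEnd ℂ) (y (i, j)) * p i * q j) *
        ((∑ i : Fin 2, (starRingEnd ℂ) (u i) * r i) *
         ((∑ i : Fin 2, (starRingEnd ℂ) (v i) * s i) *
          (∑ i : Fin 2, (starRingEnd ℂ) (w i) * t i))) := by
  simp only [ip5, tp5, Fintype.sum_prod_type, Fin.sum_univ_two, map_mul]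
  ring

/-- Merging systems A and B of the five-qubit product set `T` into a single `ℂ⁴` factor, the resulting set of eight orthogonal product vectors in `ℂ²_C ⊗ ℂ²_D ⊗ ℂ²_E ⊗ ℂ⁴_{AB}` is NOT an unextendible product basis: some nonzero product vector `u ⊗ v ⊗ w ⊗ y` is orthogonal to all eight members. -/
theorem stmt6 (x₁ x₂ x₃ x₄ x₅ y₃ y₄ y₅ w₃ w₄ w₅ : ℝ)
    (hx₁ : x₁ ∈ Set.Ioo 0 (Real.pi / 2)) (hx₂ : x₂ ∈ Set.Ioo 0 (Real.pi / 2))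
    (hx₃ : x₃ ∈ Set.Ioo 0 (Real.pi / 2)) (hx₄ : x₄ ∈ Set.Ioo 0 (Real.pi / 2))
    (hx₅ : x₅ ∈ Set.Ioo 0 (Real.pi / 2)) (hy₃ : y₃ ∈ Set.Ioo 0 (Real.pi / 2))
    (hy₄ : y₄ ∈ Set.Ioo 0 (Real.pi / 2)) (hy₅ : y₅ ∈ Set.Ioo 0 (Real.pi / 2))
    (hw₃ : w₃ ∈ Set.Ioo 0 (Real.pi / 2)) (hw₄ : w₄ ∈ Set.Ioo 0 (Real.pi / 2))
    (hw₅ : w₅ ∈ Set.Ioo 0 (Real.pi / 2))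
    (hne₃ : y₃ ≠ w₃) (hne₄ : y₄ ≠ w₄) (hne₅ : y₅ ≠ w₅) :
    ∃ (u v w : Fin 2 → ℂ) (y : Fin 2 × Fin 2 → ℂ),
      (fun x : Fin 2 × Fin 2 × Fin 2 × Fin 2 × Fin 2 => u x.2.2.1 * v x.2.2.2.1 * w x.2.2.2.2 * y (x.1, x.2.1)) ≠ 0 ∧
      ∀ k : Fin 8, ip5 (fun x : Fin 2 × Fin 2 × Fin 2 × Fin 2 × Fin 2 => u x.2.2.1 * v x.2.2.2.1 * w x.2.2.2.2 * y (x.1, x.2.1)) (T5 x₁ x₂ x₃ x₄ x₅ y₃ y₄ y₅ w₃ w₄ w₅ k) = 0 := by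
  obtain ⟨hx₁0, hx₁1⟩ := hx₁
  obtain ⟨hx₂0, hx₂1⟩ := hx₂
  obtain ⟨hx₄0, hx₄1⟩ := hx₄
  obtain ⟨hx₅0, hx₅1⟩ := hx₅
  set c₁ := Real.cos x₁ with hc₁
  set s₁ := Real.sin x₁ with hs₁
  set c₂ := Real.cos x₂ with hc₂
  set s₂ := Real.sin x₂ with hs₂
  obtain ⟨Y, hY⟩ : ∃ Y : Fin 2 × Fin 2 → ℂ, Y =
      fun p => (![![(-(c₁^2*s₂^2 + s₁^2*c₂^2 + s₁^2*s₂^2) : ℝ), (c₁*c₂*(c₁*s₂) : ℝ)],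
               ![(c₁*c₂*(c₂*s₁) : ℝ), (c₁*c₂*(s₁*s₂) : ℝ)]] p.1 p.2 : ℂ) := ⟨_, rfl⟩
  refine ⟨ket1, ketm x₄, ketp x₅, Y, ?_, ?_⟩
  · intro h
    have := congrFun h (1, 1, 1, 0, 0)
    simp only [ket1, ketm, ketp, hY, Matrix.cons_val_one, Matrix.head_cons, Matrix.cons_val_zero,
      Pi.zero_apply] at this
    have h1 : (Real.sin x₄ : ℂ) ≠ 0 := by
      exact_mod_cast (Real.sin_pos_of_pos_of_lt_pi hx₄0 (by linarith [Real.pi_pos])).ne'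
    have h2 : (Real.cos x₅ : ℂ) ≠ 0 := by
      exact_mod_cast (Real.cos_pos_of_mem_Ioo ⟨by linarith [Real.pi_pos], hx₅1⟩).ne'
    have h3 : (c₁ : ℂ) ≠ 0 := by
      exact_mod_cast (Real.cos_pos_of_mem_Ioo ⟨by linarith [Real.pi_pos], hx₁1⟩).ne'
    have h4 : (c₂ : ℂ) ≠ 0 := by
      exact_mod_cast (Real.cos_pos_of_mem_Ioo ⟨by linarith [Real.pi_pos], hx₂1⟩).ne'
    have h5 : (s₁ : ℂ) ≠ 0 := by
      exact_mod_cast (Real.sin_pos_of_pos_of_lt_pi hx₁0 (by linarith [Real.pi_pos])).ne'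
    have h6 : (s₂ : ℂ) ≠ 0 := by
      exact_mod_cast (Real.sin_pos_of_pos_of_lt_pi hx₂0 (by linarith [Real.pi_pos])).ne'
    simp only [Complex.ofReal_mul, mul_eq_zero, one_mul, Complex.ofReal_neg] at this
    tauto
  · intro k
    fin_cases k <;>
    · show ip5 _ (tp5 _ _ _ _ _) = 0
      rw [ip5_prod]
      simp only [hY, ket0, ket1, ketp, ketm, Fin.sum_univ_two, Matrix.cons_val_zero,
        Matrix.cons_val_one, Matrix.head_cons, map_mul, map_neg, Complex.conj_ofReal,
        map_one, map_zero, Complex.ofReal_mul, Complex.ofReal_neg, Complex.ofReal_pow,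
        Complex.ofReal_add]
      ring
end

section
/- If the systems C and D of the eight-element five-qubit product set T are merged into a single ℂ⁴ factor, the resulting set of eight pairwise orthogonal product vectors in ℂ²_A ⊗ ℂ²_B ⊗ ℂ²_E ⊗ ℂ⁴_{CD} is NOT an unextendible product basis: there exists a nonzero product vector u ⊗ v ⊗ w ⊗ y (u,v,w ∈ ℂ², y ∈ ℂ⁴) orthogonal to all eight members of the merged set. (In fact u = a₁', v = a₂, w = c₅, and y may be chosen orthogonal to |0⟩⊗|0⟩, |1⟩⊗a₄ and c₃'⊗c₄'.) -/
open scoped BigOperators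

lemma key5 (u v w p q r s t : Fin 2 → ℂ) (y : Fin 2 × Fin 2 → ℂ) :
    ip5 (fun x : Fin 2 × Fin 2 × Fin 2 × Fin 2 × Fin 2 =>
        u x.1 * v x.2.1 * w x.2.2.2.2 * y (x.2.2.1, x.2.2.2.1)) (tp5 p q r s t)
    = (∑ i, (starRingEnd ℂ) (u i) * p i) * ((∑ i, (starRingEnd ℂ) (v i) * q i) *
      ((∑ i, (starRingEnd ℂ) (w i) * t i) *
       (∑ i, ∑ j, (starRingEnd ℂ) (y (i, j)) * (r i * s j)))) := by
  simp only [ip5, tp5, Fintype.sum_prod_type, Fin.sum_univ_two, map_mul]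
  ring


/-- Merging systems C and D of the five-qubit product set `T` into a single `ℂ⁴` factor, the resulting set of eight orthogonal product vectors in `ℂ²_A ⊗ ℂ²_B ⊗ ℂ²_E ⊗ ℂ⁴_{CD}` is NOT an unextendible product basis: some nonzero product vector `u ⊗ v ⊗ w ⊗ y` is orthogonal to all eight members. -/
theorem stmt7 (x₁ x₂ x₃ x₄ x₅ y₃ y₄ y₅ w₃ w₄ w₅ : ℝ)
    (hx₁ : x₁ ∈ Set.Ioo 0 (Real.pi / 2)) (hx₂ : x₂ ∈ Set.Ioo 0 (Real.pi / 2))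
    (hx₃ : x₃ ∈ Set.Ioo 0 (Real.pi / 2)) (hx₄ : x₄ ∈ Set.Ioo 0 (Real.pi / 2))
    (hx₅ : x₅ ∈ Set.Ioo 0 (Real.pi / 2)) (hy₃ : y₃ ∈ Set.Ioo 0 (Real.pi / 2))
    (hy₄ : y₄ ∈ Set.Ioo 0 (Real.pi / 2)) (hy₅ : y₅ ∈ Set.Ioo 0 (Real.pi / 2))
    (hw₃ : w₃ ∈ Set.Ioo 0 (Real.pi / 2)) (hw₄ : w₄ ∈ Set.Ioo 0 (Real.pi / 2))
    (hw₅ : w₅ ∈ Set.Ioo 0 (Real.pi / 2))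
    (hne₃ : y₃ ≠ w₃) (hne₄ : y₄ ≠ w₄) (hne₅ : y₅ ≠ w₅) :
    ∃ (u v w : Fin 2 → ℂ) (y : Fin 2 × Fin 2 → ℂ),
      (fun x : Fin 2 × Fin 2 × Fin 2 × Fin 2 × Fin 2 => u x.1 * v x.2.1 * w x.2.2.2.2 * y (x.2.2.1, x.2.2.2.1)) ≠ 0 ∧
      ∀ k : Fin 8, ip5 (fun x : Fin 2 × Fin 2 × Fin 2 × Fin 2 × Fin 2 => u x.1 * v x.2.1 * w x.2.2.2.2 * y (x.2.2.1, x.2.2.2.1)) (T5 x₁ x₂ x₃ x₄ x₅ y₃ y₄ y₅ w₃ w₄ w₅ k) = 0 := by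
  set Y : Fin 2 × Fin 2 → ℂ := fun p =>
    ![![(0:ℂ), ((-(Real.cos w₃ * (Real.sin w₄ * Real.sin x₄ + Real.cos w₄ * Real.cos x₄)) : ℝ) : ℂ)],
      ![((Real.sin x₄ * (Real.sin w₃ * Real.cos w₄) : ℝ) : ℂ),
        ((-(Real.cos x₄ * (Real.sin w₃ * Real.cos w₄)) : ℝ) : ℂ)]] p.1 p.2 with hY
  refine ⟨ketm x₁, ketp x₂, ketp w₅, Y, ?_, ?_⟩
  · intro h
    have h0 := congrFun h (0, 0, 1, 0, 0)
    simp only [hY, ketm, ketp, Matrix.cons_val_zero, Matrix.cons_val_one, Matrix.head_cons,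
      Pi.zero_apply] at h0
    have hs1 : Real.sin x₁ ≠ 0 :=
      ne_of_gt (Real.sin_pos_of_pos_of_lt_pi hx₁.1 (by linarith [Real.pi_pos, hx₁.2]))
    have hc2 : Real.cos x₂ ≠ 0 :=
      ne_of_gt (Real.cos_pos_of_mem_Ioo ⟨by linarith [hx₂.1, Real.pi_pos], hx₂.2⟩)
    have hc5 : Real.cos w₅ ≠ 0 :=
      ne_of_gt (Real.cos_pos_of_mem_Ioo ⟨by linarith [hw₅.1, Real.pi_pos], hw₅.2⟩)
    have hs4 : Real.sin x₄ ≠ 0 :=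
      ne_of_gt (Real.sin_pos_of_pos_of_lt_pi hx₄.1 (by linarith [Real.pi_pos, hx₄.2]))
    have hs3 : Real.sin w₃ ≠ 0 :=
      ne_of_gt (Real.sin_pos_of_pos_of_lt_pi hw₃.1 (by linarith [Real.pi_pos, hw₃.2]))
    have hc4 : Real.cos w₄ ≠ 0 :=
      ne_of_gt (Real.cos_pos_of_mem_Ioo ⟨by linarith [hw₄.1, Real.pi_pos], hw₄.2⟩)
    exact (mul_ne_zero (mul_ne_zero (mul_ne_zero
      (Complex.ofReal_ne_zero.mpr hs1) (Complex.ofReal_ne_zero.mpr hc2))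
      (Complex.ofReal_ne_zero.mpr hc5))
      (Complex.ofReal_ne_zero.mpr (mul_ne_zero hs4 (mul_ne_zero hs3 hc4)))) h0
  · intro k
    fin_cases k
    · show ip5 _ (tp5 ket0 ket0 ket0 ket0 ket0) = 0
      rw [key5]
      simp only [hY, ketp, ketm, ket0, ket1, Fin.sum_univ_two, Matrix.cons_val_zero,
        Matrix.cons_val_one, Matrix.head_cons, Complex.conj_ofReal, map_neg, map_zero,
        map_one, map_mul, mul_zero, zero_mul, mul_one, one_mul, add_zero, zero_add]
      try (push_cast; ring)
    · show ip5 _ (tp5 ket0 ket0 ket1 (ketp x₄) (ketp x₅)) = 0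
      rw [key5]
      simp only [hY, ketp, ketm, ket0, ket1, Fin.sum_univ_two, Matrix.cons_val_zero,
        Matrix.cons_val_one, Matrix.head_cons, Complex.conj_ofReal, map_neg, map_zero,
        map_one, map_mul, mul_zero, zero_mul, mul_one, one_mul, add_zero, zero_add]
      try (push_cast; ring)
    · show ip5 _ (tp5 (ketp x₁) (ketp x₂) (ketp x₃) ket1 (ketm x₅)) = 0
      rw [key5]
      simp only [hY, ketp, ketm, ket0, ket1, Fin.sum_univ_two, Matrix.cons_val_zero,
        Matrix.cons_val_one, Matrix.head_cons, Complex.conj_ofReal, map_neg, map_zero,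
        map_one, map_mul, mul_zero, zero_mul, mul_one, one_mul, add_zero, zero_add]
      try (push_cast; ring)
    · show ip5 _ (tp5 (ketp x₁) (ketp x₂) (ketm x₃) (ketm x₄) ket1) = 0
      rw [key5]
      simp only [hY, ketp, ketm, ket0, ket1, Fin.sum_univ_two, Matrix.cons_val_zero,
        Matrix.cons_val_one, Matrix.head_cons, Complex.conj_ofReal, map_neg, map_zero,
        map_one, map_mul, mul_zero, zero_mul, mul_one, one_mul, add_zero, zero_add]
      try (push_cast; ring)
    · show ip5 _ (tp5 ket1 (ketm x₂) (ketp y₃) (ketp y₄) (ketp y₅)) = 0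
      rw [key5]
      simp only [hY, ketp, ketm, ket0, ket1, Fin.sum_univ_two, Matrix.cons_val_zero,
        Matrix.cons_val_one, Matrix.head_cons, Complex.conj_ofReal, map_neg, map_zero,
        map_one, map_mul, mul_zero, zero_mul, mul_one, one_mul, add_zero, zero_add]
      try (push_cast; ring)
    · show ip5 _ (tp5 ket1 (ketm x₂) (ketm y₃) (ketp w₄) (ketp w₅)) = 0
      rw [key5]
      simp only [hY, ketp, ketm, ket0, ket1, Fin.sum_univ_two, Matrix.cons_val_zero,
        Matrix.cons_val_one, Matrix.head_cons, Complex.conj_ofReal, map_neg, map_zero,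
        map_one, map_mul, mul_zero, zero_mul, mul_one, one_mul, add_zero, zero_add]
      try (push_cast; ring)
    · show ip5 _ (tp5 (ketm x₁) ket1 (ketp w₃) (ketm y₄) (ketm w₅)) = 0
      rw [key5]
      simp only [hY, ketp, ketm, ket0, ket1, Fin.sum_univ_two, Matrix.cons_val_zero,
        Matrix.cons_val_one, Matrix.head_cons, Complex.conj_ofReal, map_neg, map_zero,
        map_one, map_mul, mul_zero, zero_mul, mul_one, one_mul, add_zero, zero_add]
      try (push_cast; ring)
    · show ip5 _ (tp5 (ketm x₁) ket1 (ketm w₃) (ketm w₄) (ketm y₅)) = 0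
      rw [key5]
      simp only [hY, ketp, ketm, ket0, ket1, Fin.sum_univ_two, Matrix.cons_val_zero,
        Matrix.cons_val_one, Matrix.head_cons, Complex.conj_ofReal, map_neg, map_zero,
        map_one, map_mul, mul_zero, zero_mul, mul_one, one_mul, add_zero, zero_add]
      try (push_cast; ring)
end

section
/- If the systems C and E of the eight-element five-qubit product set T are merged into a single ℂ⁴ factor, the resulting set of eight pairwise orthogonal product vectors in ℂ²_A ⊗ ℂ²_B ⊗ ℂ²_D ⊗ ℂ⁴_{CE} is NOT an unextendible product basis: there exists a nonzero product vector u ⊗ v ⊗ w ⊗ y (u,v,w ∈ ℂ², y ∈ ℂ⁴) orthogonal to all eight members of the merged set. (In fact u = a₁', v = a₂, w = b₄, and y may be chosen orthogonal to |0⟩⊗|0⟩, |1⟩⊗a₅ and c₃'⊗b₅'.) -/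
open scoped BigOperators

set_option maxHeartbeats 1600000 in
/-- Merging systems C and E of the five-qubit product set `T` into a single `ℂ⁴` factor, the resulting set of eight orthogonal product vectors in `ℂ²_A ⊗ ℂ²_B ⊗ ℂ²_D ⊗ ℂ⁴_{CE}` is NOT an unextendible product basis: some nonzero product vector `u ⊗ v ⊗ w ⊗ y` is orthogonal to all eight members. -/
theorem stmt8 (x₁ x₂ x₃ x₄ x₅ y₃ y₄ y₅ w₃ w₄ w₅ : ℝ)
    (hx₁ : x₁ ∈ Set.Ioo 0 (Real.pi / 2)) (hx₂ : x₂ ∈ Set.Ioo 0 (Real.pi / 2))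
    (hx₃ : x₃ ∈ Set.Ioo 0 (Real.pi / 2)) (hx₄ : x₄ ∈ Set.Ioo 0 (Real.pi / 2))
    (hx₅ : x₅ ∈ Set.Ioo 0 (Real.pi / 2)) (hy₃ : y₃ ∈ Set.Ioo 0 (Real.pi / 2))
    (hy₄ : y₄ ∈ Set.Ioo 0 (Real.pi / 2)) (hy₅ : y₅ ∈ Set.Ioo 0 (Real.pi / 2))
    (hw₃ : w₃ ∈ Set.Ioo 0 (Real.pi / 2)) (hw₄ : w₄ ∈ Set.Ioo 0 (Real.pi / 2))
    (hw₅ : w₅ ∈ Set.Ioo 0 (Real.pi / 2))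
    (hne₃ : y₃ ≠ w₃) (hne₄ : y₄ ≠ w₄) (hne₅ : y₅ ≠ w₅) :
    ∃ (u v w : Fin 2 → ℂ) (y : Fin 2 × Fin 2 → ℂ),
      (fun x : Fin 2 × Fin 2 × Fin 2 × Fin 2 × Fin 2 => u x.1 * v x.2.1 * w x.2.2.2.1 * y (x.2.2.1, x.2.2.2.2)) ≠ 0 ∧
      ∀ k : Fin 8, ip5 (fun x : Fin 2 × Fin 2 × Fin 2 × Fin 2 × Fin 2 => u x.1 * v x.2.1 * w x.2.2.2.1 * y (x.2.2.1, x.2.2.2.2)) (T5 x₁ x₂ x₃ x₄ x₅ y₃ y₄ y₅ w₃ w₄ w₅ k) = 0 := by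
  obtain ⟨hx₁0, hx₁1⟩ := hx₁
  obtain ⟨hx₂0, hx₂1⟩ := hx₂
  obtain ⟨hx₅0, hx₅1⟩ := hx₅
  obtain ⟨hy₄0, hy₄1⟩ := hy₄
  obtain ⟨hy₅0, hy₅1⟩ := hy₅
  obtain ⟨hw₃0, hw₃1⟩ := hw₃
  have hpi := Real.pi_pos
  have hc : ∀ t : ℝ, t ∈ Set.Ioo 0 (Real.pi / 2) → 0 < Real.cos t := fun t ht =>
    Real.cos_pos_of_mem_Ioo ⟨by linarith [ht.1], ht.2⟩
  have hs : ∀ t : ℝ, t ∈ Set.Ioo 0 (Real.pi / 2) → 0 < Real.sin t := fun t ht =>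
    Real.sin_pos_of_pos_of_lt_pi ht.1 (by linarith [ht.2])
  have hcx₁ : Real.cos x₁ ≠ 0 := (hc x₁ ⟨hx₁0, hx₁1⟩).ne'
  have hcx₂ : Real.cos x₂ ≠ 0 := (hc x₂ ⟨hx₂0, hx₂1⟩).ne'
  have hcy₄ : Real.cos y₄ ≠ 0 := (hc y₄ ⟨hy₄0, hy₄1⟩).ne'
  have hcy₅ : Real.cos y₅ ≠ 0 := (hc y₅ ⟨hy₅0, hy₅1⟩).ne'
  have hsx₅ : Real.sin x₅ ≠ 0 := (hs x₅ ⟨hx₅0, hx₅1⟩).ne'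
  have hsw₃ : Real.sin w₃ ≠ 0 := (hs w₃ ⟨hw₃0, hw₃1⟩).ne'
  have hcy₅' : (Real.cos y₅ : ℂ) ≠ 0 := by exact_mod_cast hcy₅
  have hsw₃' : (Real.sin w₃ : ℂ) ≠ 0 := by exact_mod_cast hsw₃
  have hcy₅c : Complex.cos (y₅ : ℂ) ≠ 0 := by rw [← Complex.ofReal_cos]; exact_mod_cast hcy₅
  have hsw₃c : Complex.sin (w₃ : ℂ) ≠ 0 := by rw [← Complex.ofReal_sin]; exact_mod_cast hsw₃
  set A : ℝ := -(Real.cos w₃ * (Real.cos x₅ * Real.cos y₅ + Real.sin x₅ * Real.sin y₅))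
      / (Real.sin w₃ * Real.cos y₅) with hA
  refine ⟨ketm x₁, ketp x₂, ketp y₄,
    fun p => if p.1 = 0 then (if p.2 = 0 then 0 else (A : ℂ))
      else (if p.2 = 0 then (Real.sin x₅ : ℂ) else -(Real.cos x₅ : ℂ)), ?_, ?_⟩
  · intro h
    have h2 := congrFun h ((1 : Fin 2), (0 : Fin 2), (1 : Fin 2), (0 : Fin 2), (0 : Fin 2))
    simp only [ketm, ketp, Matrix.cons_val_one, Matrix.cons_val_zero, Matrix.head_cons,
      Pi.zero_apply] at h2
    norm_num at h2
    rcases h2 with ((h1 | h1) | h1) | h1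
    · exact hcx₁ (by exact_mod_cast h1)
    · exact hcx₂ (by exact_mod_cast h1)
    · exact hcy₄ (by exact_mod_cast h1)
    · exact hsx₅ (by exact_mod_cast h1)
  · intro k
    fin_cases k
    · show ip5 _ (tp5 ket0 ket0 ket0 ket0 ket0) = 0
      simp [ip5, tp5, ketp, ketm, ket0, ket1, Fintype.sum_prod_type, Fin.sum_univ_two,
        Complex.conj_ofReal, -Complex.ofReal_cos, -Complex.ofReal_sin]
      all_goals try push_cast [hA]
      all_goals try field_simp
      all_goals try ring
    · show ip5 _ (tp5 ket0 ket0 ket1 (ketp x₄) (ketp x₅)) = 0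
      simp [ip5, tp5, ketp, ketm, ket0, ket1, Fintype.sum_prod_type, Fin.sum_univ_two,
        Complex.conj_ofReal, -Complex.ofReal_cos, -Complex.ofReal_sin]
      all_goals try push_cast [hA]
      all_goals try field_simp
      all_goals try ring
    · show ip5 _ (tp5 (ketp x₁) (ketp x₂) (ketp x₃) ket1 (ketm x₅)) = 0
      simp [ip5, tp5, ketp, ketm, ket0, ket1, Fintype.sum_prod_type, Fin.sum_univ_two,
        Complex.conj_ofReal, -Complex.ofReal_cos, -Complex.ofReal_sin]
      all_goals try push_cast [hA]
      all_goals try field_simp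
      all_goals try ring
    · show ip5 _ (tp5 (ketp x₁) (ketp x₂) (ketm x₃) (ketm x₄) ket1) = 0
      simp [ip5, tp5, ketp, ketm, ket0, ket1, Fintype.sum_prod_type, Fin.sum_univ_two,
        Complex.conj_ofReal, -Complex.ofReal_cos, -Complex.ofReal_sin]
      all_goals try push_cast [hA]
      all_goals try field_simp
      all_goals try ring
    · show ip5 _ (tp5 ket1 (ketm x₂) (ketp y₃) (ketp y₄) (ketp y₅)) = 0
      simp [ip5, tp5, ketp, ketm, ket0, ket1, Fintype.sum_prod_type, Fin.sum_univ_two,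
        Complex.conj_ofReal, -Complex.ofReal_cos, -Complex.ofReal_sin]
      all_goals try push_cast [hA]
      all_goals try field_simp
      all_goals try ring
    · show ip5 _ (tp5 ket1 (ketm x₂) (ketm y₃) (ketp w₄) (ketp w₅)) = 0
      simp [ip5, tp5, ketp, ketm, ket0, ket1, Fintype.sum_prod_type, Fin.sum_univ_two,
        Complex.conj_ofReal, -Complex.ofReal_cos, -Complex.ofReal_sin]
      all_goals try push_cast [hA]
      all_goals try field_simp
      all_goals try ring
    · show ip5 _ (tp5 (ketm x₁) ket1 (ketp w₃) (ketm y₄) (ketm w₅)) = 0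
      simp [ip5, tp5, ketp, ketm, ket0, ket1, Fintype.sum_prod_type, Fin.sum_univ_two,
        Complex.conj_ofReal, -Complex.ofReal_cos, -Complex.ofReal_sin]
      all_goals try push_cast [hA]
      all_goals try field_simp
      all_goals try ring
    · show ip5 _ (tp5 (ketm x₁) ket1 (ketm w₃) (ketm w₄) (ketm y₅)) = 0
      simp [ip5, tp5, ketp, ketm, ket0, ket1, Fintype.sum_prod_type, Fin.sum_univ_two,
        Complex.conj_ofReal, -Complex.ofReal_cos, -Complex.ofReal_sin]
      all_goals try push_cast [hA]
      all_goals try field_simp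
      all_goals try ring
end

section
/- If the systems D and E of the eight-element five-qubit product set T are merged into a single ℂ⁴ factor, the resulting set of eight pairwise orthogonal product vectors in ℂ²_A ⊗ ℂ²_B ⊗ ℂ²_C ⊗ ℂ⁴_{DE} is NOT an unextendible product basis: there exists a nonzero product vector u ⊗ v ⊗ w ⊗ y (u,v,w ∈ ℂ², y ∈ ℂ⁴) orthogonal to all eight members of the merged set. (In fact u = a₁', v = a₂, w = c₃', and y may be chosen orthogonal to |0⟩⊗|0⟩, a₄⊗a₅ and c₄'⊗b₅'.) -/
open scoped BigOperators

private lemma ip5_factor (u v w : Fin 2 → ℂ) (y : Fin 2 × Fin 2 → ℂ)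
    (p q r s t : Fin 2 → ℂ) :
    ip5 (fun x : Fin 2 × Fin 2 × Fin 2 × Fin 2 × Fin 2 =>
        u x.1 * v x.2.1 * w x.2.2.1 * y x.2.2.2) (tp5 p q r s t)
      = (∑ i, (starRingEnd ℂ) (u i) * p i) * (∑ i, (starRingEnd ℂ) (v i) * q i)
        * (∑ i, (starRingEnd ℂ) (w i) * r i)
        * (∑ i : Fin 2 × Fin 2, (starRingEnd ℂ) (y i) * (s i.1 * t i.2)) := by
  simp only [ip5, tp5, Fintype.sum_prod_type, Fin.sum_univ_two, map_mul]
  ring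

private lemma ip2_mp (θ : ℝ) :
    (∑ i, (starRingEnd ℂ) (ketm θ i) * ketp θ i) = 0 := by
  simp only [Fin.sum_univ_two, ketm, ketp, Matrix.cons_val_zero, Matrix.cons_val_one,
    Matrix.head_cons, map_neg, Complex.conj_ofReal]; ring

private lemma ip2_pm (θ : ℝ) :
    (∑ i, (starRingEnd ℂ) (ketp θ i) * ketm θ i) = 0 := by
  simp only [Fin.sum_univ_two, ketm, ketp, Matrix.cons_val_zero, Matrix.cons_val_one,
    Matrix.head_cons, map_neg, Complex.conj_ofReal]; ring

/-- Merging systems D and E of the five-qubit product set `T` into a single `ℂ⁴` factor, the resulting set of eight orthogonal product vectors in `ℂ²_A ⊗ ℂ²_B ⊗ ℂ²_C ⊗ ℂ⁴_{DE}` is NOT an unextendible product basis: some nonzero product vector `u ⊗ v ⊗ w ⊗ y` is orthogonal to all eight members. -/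
theorem stmt9 (x₁ x₂ x₃ x₄ x₅ y₃ y₄ y₅ w₃ w₄ w₅ : ℝ)
    (hx₁ : x₁ ∈ Set.Ioo 0 (Real.pi / 2)) (hx₂ : x₂ ∈ Set.Ioo 0 (Real.pi / 2))
    (hx₃ : x₃ ∈ Set.Ioo 0 (Real.pi / 2)) (hx₄ : x₄ ∈ Set.Ioo 0 (Real.pi / 2))
    (hx₅ : x₅ ∈ Set.Ioo 0 (Real.pi / 2)) (hy₃ : y₃ ∈ Set.Ioo 0 (Real.pi / 2))
    (hy₄ : y₄ ∈ Set.Ioo 0 (Real.pi / 2)) (hy₅ : y₅ ∈ Set.Ioo 0 (Real.pi / 2))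
    (hw₃ : w₃ ∈ Set.Ioo 0 (Real.pi / 2)) (hw₄ : w₄ ∈ Set.Ioo 0 (Real.pi / 2))
    (hw₅ : w₅ ∈ Set.Ioo 0 (Real.pi / 2))
    (hne₃ : y₃ ≠ w₃) (hne₄ : y₄ ≠ w₄) (hne₅ : y₅ ≠ w₅) :
    ∃ (u v w : Fin 2 → ℂ) (y : Fin 2 × Fin 2 → ℂ),
      (fun x : Fin 2 × Fin 2 × Fin 2 × Fin 2 × Fin 2 => u x.1 * v x.2.1 * w x.2.2.1 * y x.2.2.2) ≠ 0 ∧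
      ∀ k : Fin 8, ip5 (fun x : Fin 2 × Fin 2 × Fin 2 × Fin 2 × Fin 2 => u x.1 * v x.2.1 * w x.2.2.1 * y x.2.2.2) (T5 x₁ x₂ x₃ x₄ x₅ y₃ y₄ y₅ w₃ w₄ w₅ k) = 0 := by
  obtain ⟨hx₁0, hx₁1⟩ := hx₁
  obtain ⟨hx₂0, hx₂1⟩ := hx₂
  obtain ⟨hw₃0, hw₃1⟩ := hw₃
  obtain ⟨hx₄0, hx₄1⟩ := hx₄
  obtain ⟨hw₄0, hw₄1⟩ := hw₄
  obtain ⟨hx₅0, hx₅1⟩ := hx₅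
  obtain ⟨hy₅0, hy₅1⟩ := hy₅
  have hpi := Real.pi_pos
  set A : ℝ := Real.sin x₄ * Real.cos w₄ * Real.cos (x₅ - y₅) with hA
  set B : ℝ := -(Real.sin x₄ * Real.sin x₅ * Real.sin w₄ * Real.cos y₅)
      - Real.cos x₄ * Real.sin x₅ * Real.cos w₄ * Real.cos y₅ with hB
  set C : ℝ := -(Real.cos x₄ * Real.sin x₅ * Real.cos w₄ * Real.sin y₅)
      + Real.sin x₄ * Real.cos x₅ * Real.sin w₄ * Real.cos y₅ with hC
  set Y : Fin 2 × Fin 2 → ℂ :=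
    fun p => ![![(0 : ℂ), (A : ℂ)], ![(B : ℂ), (C : ℂ)]] p.1 p.2 with hY
  have hs₁ : Real.sin x₁ ≠ 0 :=
    ne_of_gt (Real.sin_pos_of_pos_of_lt_pi hx₁0 (by linarith))
  have hc₂ : Real.cos x₂ ≠ 0 :=
    ne_of_gt (Real.cos_pos_of_mem_Ioo ⟨by linarith, by linarith⟩)
  have hs₃ : Real.sin w₃ ≠ 0 :=
    ne_of_gt (Real.sin_pos_of_pos_of_lt_pi hw₃0 (by linarith))
  have hAne : A ≠ 0 := by
    have h1 : Real.sin x₄ > 0 := Real.sin_pos_of_pos_of_lt_pi hx₄0 (by linarith)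
    have h2 : Real.cos w₄ > 0 := Real.cos_pos_of_mem_Ioo ⟨by linarith, by linarith⟩
    have h3 : Real.cos (x₅ - y₅) > 0 :=
      Real.cos_pos_of_mem_Ioo ⟨by linarith, by linarith⟩
    positivity
  refine ⟨ketm x₁, ketp x₂, ketm w₃, Y, ?_, ?_⟩
  · intro h
    have h0 := congrFun h (0, 0, 0, (0, 1))
    simp only [hY, ketm, ketp, Matrix.cons_val_zero, Matrix.cons_val_one, Matrix.head_cons,
      Pi.zero_apply, mul_eq_zero, Complex.ofReal_eq_zero, neg_eq_zero] at h0
    tauto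
  · intro k
    have hy1 : (∑ i : Fin 2 × Fin 2, (starRingEnd ℂ) (Y i) * (ket0 i.1 * ket0 i.2)) = 0 := by
      simp [Fintype.sum_prod_type, Fin.sum_univ_two, hY, ket0]
    have hy2 : (∑ i : Fin 2 × Fin 2,
        (starRingEnd ℂ) (Y i) * (ketp x₄ i.1 * ketp x₅ i.2)) = 0 := by
      simp only [Fintype.sum_prod_type, Fin.sum_univ_two, hY, ketp, hA, hB, hC,
        Matrix.cons_val_zero, Matrix.cons_val_one, Matrix.head_cons, map_zero, map_mul,
        map_sub, map_add, map_neg, Complex.conj_ofReal, Real.cos_sub,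
        Complex.ofReal_mul, Complex.ofReal_neg, Complex.ofReal_add, Complex.ofReal_sub]
      ring
    have hy8 : (∑ i : Fin 2 × Fin 2,
        (starRingEnd ℂ) (Y i) * (ketm w₄ i.1 * ketm y₅ i.2)) = 0 := by
      simp only [Fintype.sum_prod_type, Fin.sum_univ_two, hY, ketm, hA, hB, hC,
        Matrix.cons_val_zero, Matrix.cons_val_one, Matrix.head_cons, map_zero, map_mul,
        map_sub, map_add, map_neg, Complex.conj_ofReal, Real.cos_sub,
        Complex.ofReal_mul, Complex.ofReal_neg, Complex.ofReal_add, Complex.ofReal_sub]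
      ring
    fin_cases k
    · show ip5 (fun x : Fin 2 × Fin 2 × Fin 2 × Fin 2 × Fin 2 => ketm x₁ x.1 * ketp x₂ x.2.1 * ketm w₃ x.2.2.1 * Y x.2.2.2) (tp5 ket0 ket0 ket0 ket0 ket0) = 0
      rw [ip5_factor, hy1, mul_zero]
    · show ip5 (fun x : Fin 2 × Fin 2 × Fin 2 × Fin 2 × Fin 2 => ketm x₁ x.1 * ketp x₂ x.2.1 * ketm w₃ x.2.2.1 * Y x.2.2.2) (tp5 ket0 ket0 ket1 (ketp x₄) (ketp x₅)) = 0
      rw [ip5_factor, hy2, mul_zero]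
    · show ip5 (fun x : Fin 2 × Fin 2 × Fin 2 × Fin 2 × Fin 2 => ketm x₁ x.1 * ketp x₂ x.2.1 * ketm w₃ x.2.2.1 * Y x.2.2.2) (tp5 (ketp x₁) (ketp x₂) (ketp x₃) ket1 (ketm x₅)) = 0
      rw [ip5_factor, ip2_mp x₁, zero_mul, zero_mul, zero_mul]
    · show ip5 (fun x : Fin 2 × Fin 2 × Fin 2 × Fin 2 × Fin 2 => ketm x₁ x.1 * ketp x₂ x.2.1 * ketm w₃ x.2.2.1 * Y x.2.2.2) (tp5 (ketp x₁) (ketp x₂) (ketm x₃) (ketm x₄) ket1) = 0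
      rw [ip5_factor, ip2_mp x₁, zero_mul, zero_mul, zero_mul]
    · show ip5 (fun x : Fin 2 × Fin 2 × Fin 2 × Fin 2 × Fin 2 => ketm x₁ x.1 * ketp x₂ x.2.1 * ketm w₃ x.2.2.1 * Y x.2.2.2) (tp5 ket1 (ketm x₂) (ketp y₃) (ketp y₄) (ketp y₅)) = 0
      rw [ip5_factor, ip2_pm, mul_zero, zero_mul, zero_mul]
    · show ip5 (fun x : Fin 2 × Fin 2 × Fin 2 × Fin 2 × Fin 2 => ketm x₁ x.1 * ketp x₂ x.2.1 * ketm w₃ x.2.2.1 * Y x.2.2.2) (tp5 ket1 (ketm x₂) (ketm y₃) (ketp w₄) (ketp w₅)) = 0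
      rw [ip5_factor, ip2_pm, mul_zero, zero_mul, zero_mul]
    · show ip5 (fun x : Fin 2 × Fin 2 × Fin 2 × Fin 2 × Fin 2 => ketm x₁ x.1 * ketp x₂ x.2.1 * ketm w₃ x.2.2.1 * Y x.2.2.2) (tp5 (ketm x₁) ket1 (ketp w₃) (ketm y₄) (ketm w₅)) = 0
      rw [ip5_factor, ip2_mp w₃, mul_zero, zero_mul]
    · show ip5 (fun x : Fin 2 × Fin 2 × Fin 2 × Fin 2 × Fin 2 => ketm x₁ x.1 * ketp x₂ x.2.1 * ketm w₃ x.2.2.1 * Y x.2.2.2) (tp5 (ketm x₁) ket1 (ketm w₃) (ketm w₄) (ketm y₅)) = 0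
      rw [ip5_factor, hy8, mul_zero]
end
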